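/- arXiv:2504.04887 — 6 statements merged into one kernel-verified Lean document; each statement's English description precedes it below -/
import Mathlib

section
/- Let X and Y be nonempty compact intervals in ℝ, let f : X → X and g : Y → Y be continuous maps, and let π : X → Y be a homeomorphism such that π ∘ f = g ∘ π. Then the set of relevant extrema of f and the set of relevant extrema of g have the same cardinality, i.e. relEx(f) = relEx(g). -/
open Set Filter

/-- `x` is a proper local extremum of `f` relative to `X`: on some neighborhood of `x`
in `X`, all other points have strictly smaller (resp. strictly larger) value. -/
def ProperLocalExtremum (f : ℝ → ℝ) (X : Set ℝ) (x : ℝ) : Prop :=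
  (∃ U ∈ nhdsWithin x X, ∀ y ∈ U \ {x}, f y < f x) ∨
  (∃ U ∈ nhdsWithin x X, ∀ y ∈ U \ {x}, f x < f y)

/-- The set of relevant extrema of `f : X → X`: proper local extrema `x` in the interior
of `X` with `min_{X} f ≤ x ≤ max_{X} f`. -/
noncomputable def relExSet (f : ℝ → ℝ) (X : Set ℝ) : Set ℝ :=
  {x | x ∈ interior X ∧ ProperLocalExtremum f X x ∧
       sInf (f '' X) ≤ x ∧ x ≤ sSup (f '' X)}

theorem relEx_mapsTo
    (a b c d : ℝ) (hab : a ≤ b) (hcd : c ≤ d)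
    (f g π ρ : ℝ → ℝ)
    (hf : ContinuousOn f (Icc a b)) (hfm : MapsTo f (Icc a b) (Icc a b))
    (hπ : ContinuousOn π (Icc a b)) (hπm : MapsTo π (Icc a b) (Icc c d))
    (hρ : ContinuousOn ρ (Icc c d)) (hρm : MapsTo ρ (Icc c d) (Icc a b))
    (hinv : InvOn ρ π (Icc a b) (Icc c d))
    (hconj : ∀ x ∈ Icc a b, π (f x) = g (π x)) :
    MapsTo π (relExSet f (Icc a b)) (relExSet g (Icc c d)) := by
  have hinj : InjOn π (Icc a b) := hinv.1.injOn
  have hsurj : SurjOn π (Icc a b) (Icc c d) := hinv.2.surjOn hρm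
  have haX : a ∈ Icc a b := ⟨le_rfl, hab⟩
  have hbX : b ∈ Icc a b := ⟨hab, le_rfl⟩
  have hcY : c ∈ Icc c d := ⟨le_rfl, hcd⟩
  have hdY : d ∈ Icc c d := ⟨hcd, le_rfl⟩
  -- image of f''X under π is g''Y
  have himg : g '' (Icc c d) = π '' (f '' (Icc a b)) := by
    apply Subset.antisymm
    · rintro _ ⟨y, hy, rfl⟩
      have hρy := hρm hy
      have : π (f (ρ y)) = g y := by rw [hconj _ hρy, hinv.2 hy]
      exact ⟨f (ρ y), ⟨ρ y, hρy, rfl⟩, this⟩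
    · rintro _ ⟨_, ⟨x, hx, rfl⟩, rfl⟩
      exact ⟨π x, hπm hx, (hconj _ hx).symm⟩
  have hKf : IsCompact (f '' (Icc a b)) := (isCompact_Icc).image_of_continuousOn hf
  have hKne : (f '' (Icc a b)).Nonempty := ⟨f a, a, haX, rfl⟩
  set m := sInf (f '' (Icc a b)) with hm
  set M := sSup (f '' (Icc a b)) with hM
  have hmmem : m ∈ f '' (Icc a b) := hKf.sInf_mem hKne
  have hMmem : M ∈ f '' (Icc a b) := hKf.sSup_mem hKne
  have hfsub : f '' (Icc a b) ⊆ Icc a b := image_subset_iff.2 hfm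
  have hmX : m ∈ Icc a b := hfsub hmmem
  have hMX : M ∈ Icc a b := hfsub hMmem
  have hmono := ContinuousOn.strictMonoOn_of_injOn_Icc' hab hπ hinj
  rintro x ⟨hxint, hext, hinf, hsup⟩
  rw [interior_Icc] at hxint
  have hxX : x ∈ Icc a b := Ioo_subset_Icc_self hxint
  have hπab : π a = c ∨ π a = d := by
    rcases hmono with hm' | hm'
    · left
      refine le_antisymm ?_ (hπm haX).1
      obtain ⟨z, hz, hzc⟩ := hsurj hcY
      calc π a ≤ π z := hm'.monotoneOn haX hz hz.1
        _ = c := hzc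
    · right
      refine le_antisymm (hπm haX).2 ?_
      obtain ⟨z, hz, hzd⟩ := hsurj hdY
      calc d = π z := hzd.symm
        _ ≤ π a := hm'.antitoneOn haX hz hz.1
  have hπba : π b = d ∨ π b = c := by
    rcases hmono with hm' | hm'
    · left
      refine le_antisymm (hπm hbX).2 ?_
      obtain ⟨z, hz, hzd⟩ := hsurj hdY
      calc d = π z := hzd.symm
        _ ≤ π b := hm'.monotoneOn hz hbX hz.2
    · right
      refine le_antisymm ?_ (hπm hbX).1
      obtain ⟨z, hz, hzc⟩ := hsurj hcY
      calc π b ≤ π z := hm'.antitoneOn hz hbX hz.2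
        _ = c := hzc
  refine ⟨?_, ?_, ?_, ?_⟩
  · -- interior
    rw [interior_Icc]
    rcases hmono with hm' | hm'
    · have h1 : π a < π x := hm' haX hxX hxint.1
      have h2 : π x < π b := hm' hxX hbX hxint.2
      constructor
      · rcases hπab with h | h
        · linarith
        · linarith [(hπm hbX).2, (hπm hxX).1]
      · rcases hπba with h | h
        · linarith
        · linarith [(hπm haX).1, (hπm hxX).2]
    · have h1 : π x < π a := hm' haX hxX hxint.1
      have h2 : π b < π x := hm' hxX hbX hxint.2
      constructor
      · rcases hπba with h | h
        · linarith [(hπm haX).2, (hπm hxX).1]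
        · linarith
      · rcases hπab with h | h
        · linarith [(hπm hbX).1, (hπm hxX).2]
        · linarith
  · -- proper local extremum
    have hρπx : ρ (π x) = x := hinv.1 hxX
    have hπxY : π x ∈ Icc c d := hπm hxX
    have htend : Tendsto ρ (nhdsWithin (π x) (Icc c d)) (nhdsWithin x (Icc a b)) := by
      have := (hρ.continuousWithinAt hπxY)
      rw [ContinuousWithinAt, hρπx] at this
      exact tendsto_nhdsWithin_of_tendsto_nhds_of_eventually_within _ this
        (eventually_nhdsWithin_of_forall fun y hy => hρm hy)
    obtain ⟨U, hU, hlt⟩ | ⟨U, hU, hlt⟩ := hext <;>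
    [rcases hmono with hm' | hm'; rcases hmono with hm' | hm'] <;>
    have hV : ρ ⁻¹' U ∩ Icc c d ∈ nhdsWithin (π x) (Icc c d) :=
        inter_mem (htend hU) self_mem_nhdsWithin <;>
    have key : ∀ y ∈ (ρ ⁻¹' U ∩ Icc c d) \ {π x}, ρ y ∈ U \ {x} ∧
          g y = π (f (ρ y)) ∧ g (π x) = π (f x) := by
        { rintro y ⟨⟨hyU, hyY⟩, hyne⟩
          refine ⟨⟨hyU, fun h => hyne ?_⟩, ?_, (hconj _ hxX).symm⟩
          · simp only [mem_singleton_iff] at h ⊢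
            rw [← hinv.2 hyY, h]
          · rw [hconj _ (hρm hyY), hinv.2 hyY] }
    · refine Or.inl ⟨_, hV, fun y hy => ?_⟩
      obtain ⟨hρyU, hgy, hgπx⟩ := key y hy
      rw [hgy, hgπx]
      exact hm' (hfm (hρm hy.1.2)) (hfm hxX) (hlt _ hρyU)
    · refine Or.inr ⟨_, hV, fun y hy => ?_⟩
      obtain ⟨hρyU, hgy, hgπx⟩ := key y hy
      rw [hgy, hgπx]
      exact hm' (hfm (hρm hy.1.2)) (hfm hxX) (hlt _ hρyU)
    · refine Or.inr ⟨_, hV, fun y hy => ?_⟩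
      obtain ⟨hρyU, hgy, hgπx⟩ := key y hy
      rw [hgy, hgπx]
      exact hm' (hfm hxX) (hfm (hρm hy.1.2)) (hlt _ hρyU)
    · refine Or.inl ⟨_, hV, fun y hy => ?_⟩
      obtain ⟨hρyU, hgy, hgπx⟩ := key y hy
      rw [hgy, hgπx]
      exact hm' (hfm hxX) (hfm (hρm hy.1.2)) (hlt _ hρyU)
  · -- inf bound
    rw [himg]
    rcases hmono with hm' | hm'
    · have : IsLeast (π '' (f '' Icc a b)) (π m) := by
        refine ⟨⟨m, hmmem, rfl⟩, ?_⟩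
        rintro _ ⟨t, ht, rfl⟩
        exact hm'.monotoneOn hmX (hfsub ht) (csInf_le hKf.bddBelow ht)
      rw [this.csInf_eq]
      exact hm'.monotoneOn hmX hxX hinf
    · have : IsLeast (π '' (f '' Icc a b)) (π M) := by
        refine ⟨⟨M, hMmem, rfl⟩, ?_⟩
        rintro _ ⟨t, ht, rfl⟩
        exact hm'.antitoneOn (hfsub ht) hMX (le_csSup hKf.bddAbove ht)
      rw [this.csInf_eq]
      exact hm'.antitoneOn hxX hMX hsup
  · -- sup bound
    rw [himg]
    rcases hmono with hm' | hm'
    · have : IsGreatest (π '' (f '' Icc a b)) (π M) := by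
        refine ⟨⟨M, hMmem, rfl⟩, ?_⟩
        rintro _ ⟨t, ht, rfl⟩
        exact hm'.monotoneOn (hfsub ht) hMX (le_csSup hKf.bddAbove ht)
      rw [this.csSup_eq]
      exact hm'.monotoneOn hxX hMX hsup
    · have : IsGreatest (π '' (f '' Icc a b)) (π m) := by
        refine ⟨⟨m, hmmem, rfl⟩, ?_⟩
        rintro _ ⟨t, ht, rfl⟩
        exact hm'.antitoneOn hmX (hfsub ht) (csInf_le hKf.bddBelow ht)
      rw [this.csSup_eq]
      exact hm'.antitoneOn hmX hxX hinf

/-- If `f : X → X` and `g : Y → Y` are continuous self-maps of nonempty compact intervals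
which are conjugated by a homeomorphism `π : X → Y` (with inverse `ρ`), then the sets of
relevant extrema of `f` and of `g` have the same cardinality. -/
theorem relEx_invariant_of_conjugacy
    (a b c d : ℝ) (hab : a ≤ b) (hcd : c ≤ d)
    (f g π ρ : ℝ → ℝ)
    (hf : ContinuousOn f (Icc a b)) (hfm : MapsTo f (Icc a b) (Icc a b))
    (hg : ContinuousOn g (Icc c d)) (hgm : MapsTo g (Icc c d) (Icc c d))
    (hπ : ContinuousOn π (Icc a b)) (hπm : MapsTo π (Icc a b) (Icc c d))
    (hρ : ContinuousOn ρ (Icc c d)) (hρm : MapsTo ρ (Icc c d) (Icc a b))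
    (hinv : InvOn ρ π (Icc a b) (Icc c d))
    (hconj : ∀ x ∈ Icc a b, π (f x) = g (π x)) :
    Cardinal.mk (relExSet f (Icc a b)) = Cardinal.mk (relExSet g (Icc c d)) := by
  have hconj' : ∀ y ∈ Icc c d, ρ (g y) = f (ρ y) := by
    intro y hy
    have h1 : g y = π (f (ρ y)) := by rw [hconj _ (hρm hy), hinv.2 hy]
    rw [h1, hinv.1 (hfm (hρm hy))]
  have h1 := relEx_mapsTo a b c d hab hcd f g π ρ hf hfm hπ hπm hρ hρm hinv hconj
  have h2 := relEx_mapsTo c d a b hcd hab g f ρ π hg hgm hρ hρm hπ hπm hinv.symm hconj'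
  have hsubf : relExSet f (Icc a b) ⊆ Icc a b := fun x hx =>
    interior_subset hx.1
  have hsubg : relExSet g (Icc c d) ⊆ Icc c d := fun x hx =>
    interior_subset hx.1
  have heq : relExSet g (Icc c d) = π '' (relExSet f (Icc a b)) := by
    apply Subset.antisymm
    · intro y hy
      exact ⟨ρ y, h2 hy, hinv.2 (hsubg hy)⟩
    · rintro _ ⟨x, hx, rfl⟩
      exact h1 hx
  rw [heq, Cardinal.mk_image_eq_of_injOn _ _ (hinv.1.injOn.mono hsubf)]
end

section
/- Let f₃(x) = (1 + sin(3πx))/2 (the sine map with parameter a = 3). Then the image of [0,1/6] under f₃ equals [1/2,1], the image of [1/6,1/2] under f₃ equals [0,1], the image of [1/2,5/6] under f₃ equals [0,1], and the image of [5/6,1] under f₃ equals [1/2,1]. In particular every point of N₁ = [0,1/6] is mapped into N₃ ∪ N₄ = [1/2,1], the images of N₂ = [1/6,1/2] and N₃ = [1/2,5/6] cover the whole range [0,1], and every point of N₄ = [5/6,1] is mapped into N₃ ∪ N₄. -/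
open Set

/-- The sine map `f_a(x) = (1 + sin(aπx))/2` for the parameter value `a = 3`. -/
noncomputable def sineThree : ℝ → ℝ := fun x => (1 + Real.sin (3 * Real.pi * x)) / 2

lemma sineThree_cont : Continuous sineThree := by
  unfold sineThree; fun_prop

lemma sineThree_zero : sineThree 0 = 1 / 2 := by simp [sineThree]

lemma sineThree_sixth : sineThree (1 / 6) = 1 := by
  have h : 3 * Real.pi * (1 / 6) = Real.pi / 2 := by ring
  rw [sineThree]; rw [h, Real.sin_pi_div_two]; norm_num

lemma sineThree_half : sineThree (1 / 2) = 0 := by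
  have h : 3 * Real.pi * (1 / 2) = Real.pi + Real.pi / 2 := by ring
  rw [sineThree]; rw [h, Real.sin_add, Real.sin_pi, Real.cos_pi, Real.sin_pi_div_two]
  norm_num

lemma sineThree_five_sixth : sineThree (5 / 6) = 1 := by
  have h : 3 * Real.pi * (5 / 6) = Real.pi / 2 + 2 * Real.pi := by ring
  rw [sineThree]; rw [h, Real.sin_add_two_pi, Real.sin_pi_div_two]; norm_num

lemma sineThree_one : sineThree 1 = 1 / 2 := by
  have h : 3 * Real.pi * 1 = Real.pi + 2 * Real.pi := by ring
  rw [sineThree]; rw [h, Real.sin_add_two_pi, Real.sin_pi]; norm_num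

/-- For the sine map with parameter `a = 3`: the image of `N₁ = [0,1/6]` is `[1/2,1]`,
the images of `N₂ = [1/6,1/2]` and `N₃ = [1/2,5/6]` are the whole interval `[0,1]`,
and the image of `N₄ = [5/6,1]` is `[1/2,1]`.  In particular every point of `N₁` and of
`N₄` is mapped into `N₃ ∪ N₄ = [1/2,1]`, while the images of `N₂` and `N₃` cover `[0,1]`. -/
theorem sineThree_images_of_branches :
    sineThree '' Icc 0 (1 / 6) = Icc (1 / 2) 1 ∧
    sineThree '' Icc (1 / 6) (1 / 2) = Icc 0 1 ∧
    sineThree '' Icc (1 / 2) (5 / 6) = Icc 0 1 ∧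
    sineThree '' Icc (5 / 6) 1 = Icc (1 / 2) 1 := by
  have hpi := Real.pi_pos
  refine ⟨?_, ?_, ?_, ?_⟩
  · apply Subset.antisymm
    · rintro _ ⟨x, ⟨hx0, hx1⟩, rfl⟩
      have hs0 : 0 ≤ Real.sin (3 * Real.pi * x) := by
        apply Real.sin_nonneg_of_nonneg_of_le_pi
        · positivity
        · nlinarith
      have hs1 : Real.sin (3 * Real.pi * x) ≤ 1 := Real.sin_le_one _
      constructor <;> simp only [sineThree] <;> linarith
    · have := intermediate_value_Icc (by norm_num : (0:ℝ) ≤ 1 / 6)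
        (sineThree_cont.continuousOn)
      rwa [sineThree_zero, sineThree_sixth] at this
  · apply Subset.antisymm
    · rintro _ ⟨x, ⟨hx0, hx1⟩, rfl⟩
      have hs0 : -1 ≤ Real.sin (3 * Real.pi * x) := Real.neg_one_le_sin _
      have hs1 : Real.sin (3 * Real.pi * x) ≤ 1 := Real.sin_le_one _
      constructor <;> simp only [sineThree] <;> linarith
    · have := intermediate_value_Icc' (by norm_num : (1:ℝ) / 6 ≤ 1 / 2)
        (sineThree_cont.continuousOn)
      rwa [sineThree_sixth, sineThree_half] at this
  · apply Subset.antisymm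
    · rintro _ ⟨x, ⟨hx0, hx1⟩, rfl⟩
      have hs0 : -1 ≤ Real.sin (3 * Real.pi * x) := Real.neg_one_le_sin _
      have hs1 : Real.sin (3 * Real.pi * x) ≤ 1 := Real.sin_le_one _
      constructor <;> simp only [sineThree] <;> linarith
    · have := intermediate_value_Icc (by norm_num : (1:ℝ) / 2 ≤ 5 / 6)
        (sineThree_cont.continuousOn)
      rwa [sineThree_half, sineThree_five_sixth] at this
  · apply Subset.antisymm
    · rintro _ ⟨x, ⟨hx0, hx1⟩, rfl⟩
      have heq : Real.sin (3 * Real.pi * x) = Real.sin (3 * Real.pi * x - 2 * Real.pi) :=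
        (Real.sin_sub_two_pi _).symm
      have hs0 : 0 ≤ Real.sin (3 * Real.pi * x - 2 * Real.pi) := by
        apply Real.sin_nonneg_of_nonneg_of_le_pi
        · nlinarith
        · nlinarith
      have hs1 : Real.sin (3 * Real.pi * x) ≤ 1 := Real.sin_le_one _
      constructor <;> simp only [sineThree] <;> rw [heq] at * <;> linarith
    · have := intermediate_value_Icc' (by norm_num : (5:ℝ) / 6 ≤ 1)
        (sineThree_cont.continuousOn)
      rwa [sineThree_five_sixth, sineThree_one] at this
end

section
/- (Interval Newton Method.) Let n ≥ 1, let X = ∏_{i=1}^n [α_i, β_i] ⊂ ℝⁿ be a product of compact intervals with α_i < β_i, let D ⊆ ℝⁿ be open with X ⊆ D, let F : D → ℝⁿ be continuously differentiable, and let x₀ be an interior point of X. Let K = convexHull { DF(x) : x ∈ X } ⊆ ℝ^{n×n}. Assume that every matrix A ∈ K is invertible and that the set N = { x₀ − A⁻¹ · F(x₀) : A ∈ K } is contained in the interior of X. Then F has a unique zero x* in X, and moreover x* ∈ N. -/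
/-!
By the integral mean value theorem, `F y - F x = A (y - x)` for some `A` in the hull `K`
whenever `x, y ∈ X`. Hence `F` is injective on `X`, and a point `x ∈ X` with `F x = s • F x₀`,
`s ∈ [0, 1]`, equals `x₀ - (1 - s) • A⁻¹ (F x₀)`: it lies on the segment from the Newton point
`x₀ - A⁻¹ (F x₀) ∈ N` to `x₀`, hence in `int X`. There `F` is a local diffeomorphism, so the set
of `s ∈ [0, 1]` with `s • F x₀ ∈ F '' X` is open in `[0, 1]`; it is closed because `F '' X` is
compact, and it contains `1`. By connectedness it contains `0`, and the corresponding zero of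
`F` is the Newton point for `s = 0`.
-/

open Set MeasureTheory Filter Topology

section ConvexHull

variable {E : Type*} [NormedAddCommGroup E] [NormedSpace ℝ E] [FiniteDimensional ℝ E]

/-- Carathéodory: convex combinations of `finrank ℝ E + 1` points suffice. -/
theorem convexHull_eq_iUnion_image_stdSimplex (s : Set E) :
    convexHull ℝ s = ⋃ k : Fin (Module.finrank ℝ E + 2),
      (fun p : (Fin k → ℝ) × (Fin k → E) => ∑ i, p.1 i • p.2 i) ''
        (stdSimplex ℝ (Fin k) ×ˢ univ.pi fun _ => s) := by
  refine Subset.antisymm (fun x hx => ?_) (iUnion_subset fun k => ?_)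
  · obtain ⟨ι, _, z, w, hzs, hz, hw₀, hw₁, rfl⟩ := eq_pos_convex_span_of_mem_convexHull hx
    have hcard : Fintype.card ι < Module.finrank ℝ E + 2 := by
      have := (vectorSpan ℝ (range z)).finrank_le
      have := hz.card_le_finrank_succ
      omega
    let e := Fintype.equivFin ι
    refine mem_iUnion.2 ⟨⟨_, hcard⟩, (w ∘ e.symm, z ∘ e.symm), ⟨⟨fun i => (hw₀ _).le, ?_⟩,
      fun i _ => hzs (mem_range_self _)⟩, ?_⟩
    · simpa [e.symm.sum_comp w] using hw₁
    · exact e.symm.sum_comp fun i => w i • z i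
  · rintro _ ⟨⟨w, z⟩, ⟨hw, hz⟩, rfl⟩
    exact (convex_convexHull ℝ s).sum_mem (fun i _ => hw.1 i) hw.2
      fun i _ => subset_convexHull ℝ s (hz i (mem_univ i))

theorem IsCompact.convexHull {s : Set E} (hs : IsCompact s) : IsCompact (convexHull ℝ s) := by
  rw [convexHull_eq_iUnion_image_stdSimplex]
  exact isCompact_iUnion fun k =>
    ((isCompact_stdSimplex ℝ _).prod (isCompact_univ_pi fun _ => hs)).image (by fun_prop)

end ConvexHull

section MeanValue

variable {E G : Type*} [NormedAddCommGroup E] [NormedSpace ℝ E] [FiniteDimensional ℝ E]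
  [NormedAddCommGroup G] [NormedSpace ℝ G] [FiniteDimensional ℝ G] {F : E → G}

/-- The operator is `∫₀¹ DF(x + t (y - x)) dt`; it lies in the hull because the hull is closed. -/
theorem exists_mem_convexHull_fderiv_segment_sub_eq {x y : E}
    (hdiff : ∀ z ∈ segment ℝ x y, DifferentiableAt ℝ F z)
    (hcont : ContinuousOn (fderiv ℝ F) (segment ℝ x y)) :
    ∃ A ∈ convexHull ℝ (fderiv ℝ F '' segment ℝ x y), F y - F x = A (y - x) := by
  have hseg : IsCompact (segment ℝ x y) := by
    rw [segment_eq_image']; exact isCompact_Icc.image (by fun_prop)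
  set γ : ℝ → E := fun t => x + t • (y - x)
  have hγ : MapsTo γ (Icc 0 1) (segment ℝ x y) := by
    rw [segment_eq_image']; exact mapsTo_image _ _
  have hγ_deriv (t : ℝ) : HasDerivAt γ (y - x) t := by
    simpa only [one_smul, id_eq] using ((hasDerivAt_id t).smul_const (y - x)).const_add x
  set g : ℝ → E →L[ℝ] G := fun t => fderiv ℝ F (γ t)
  have hg : ContinuousOn g (Icc 0 1) := hcont.comp (by fun_prop) hγ
  have hg_int : IntegrableOn g (Ioc 0 1) := hg.integrableOn_Icc.mono_set Ioc_subset_Icc_self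
  have : IsProbabilityMeasure (volume.restrict (Ioc (0 : ℝ) 1)) := ⟨by simp⟩
  refine ⟨∫ t in Ioc 0 1, g t, ?_, ?_⟩
  · refine (convex_convexHull ℝ _).integral_mem
      (hseg.image_of_continuousOn hcont).convexHull.isClosed
      ((ae_restrict_iff' measurableSet_Ioc).2 (.of_forall fun t ht => ?_)) hg_int
    exact subset_convexHull ℝ _ (mem_image_of_mem _ (hγ (Ioc_subset_Icc_self ht)))
  · have hFγ : ∀ t ∈ uIcc (0 : ℝ) 1, HasDerivAt (F ∘ γ) (g t (y - x)) t := fun t ht =>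
      (hdiff _ (hγ (by rwa [uIcc_of_le zero_le_one] at ht))).hasFDerivAt.comp_hasDerivAt t
        (hγ_deriv t)
    have hFTC := intervalIntegral.integral_eq_sub_of_hasDerivAt hFγ
      (ContinuousOn.intervalIntegrable_of_Icc zero_le_one
        ((ContinuousLinearMap.apply ℝ G (y - x)).continuous.comp_continuousOn hg))
    rw [intervalIntegral.integral_of_le zero_le_one,
      ← ContinuousLinearMap.integral_apply hg_int] at hFTC
    simpa [γ] using hFTC.symm

variable {D X : Set E}

theorem Convex.exists_mem_convexHull_fderiv_sub_eq (hX : Convex ℝ X) (hD : IsOpen D)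
    (hF : ContDiffOn ℝ 1 F D) (hXD : X ⊆ D) {x y : E} (hx : x ∈ X) (hy : y ∈ X) :
    ∃ A ∈ convexHull ℝ (fderiv ℝ F '' X), F y - F x = A (y - x) := by
  have hsegX := hX.segment_subset hx hy
  obtain ⟨A, hA, hFA⟩ := exists_mem_convexHull_fderiv_segment_sub_eq
    (fun z hz => (hF.differentiableOn one_ne_zero).differentiableAt (hD.mem_nhds (hXD (hsegX hz))))
    ((hF.continuousOn_fderiv_of_isOpen hD le_rfl).mono (hsegX.trans hXD))
  exact ⟨A, convexHull_mono (image_mono hsegX) hA, hFA⟩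

theorem Convex.injOn_of_forall_mem_convexHull_fderiv_injective (hX : Convex ℝ X)
    (hD : IsOpen D) (hF : ContDiffOn ℝ 1 F D) (hXD : X ⊆ D)
    (hinj : ∀ A ∈ convexHull ℝ (fderiv ℝ F '' X), Function.Injective A) : InjOn F X := by
  intro x hx y hy hFxy
  obtain ⟨A, hA, hFA⟩ := hX.exists_mem_convexHull_fderiv_sub_eq hD hF hXD hx hy
  rw [hFxy, sub_self, eq_comm, ← map_zero A] at hFA
  exact (sub_eq_zero.1 (hinj A hA hFA)).symm

end MeanValue

theorem ContDiffAt.image_mem_nhds {E G : Type*} [NormedAddCommGroup E] [NormedSpace ℝ E]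
    [CompleteSpace E] [NormedAddCommGroup G] [NormedSpace ℝ G] {F : E → G} {x : E} {X : Set E}
    (hF : ContDiffAt ℝ 1 F x) (hinv : (fderiv ℝ F x).IsInvertible) (hX : X ∈ 𝓝 x) :
    F '' X ∈ 𝓝 (F x) := by
  obtain ⟨e, he⟩ := hinv
  have hstrict : HasStrictFDerivAt F (e : E →L[ℝ] G) x := he ▸ hF.hasStrictFDerivAt one_ne_zero
  rw [← hstrict.map_nhds_eq_of_equiv]
  exact image_mem_map hX

theorem exists_eq_zero_of_forall_image_mem_nhds {α G : Type*} [TopologicalSpace α]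
    [AddCommGroup G] [Module ℝ G] [TopologicalSpace G] [ContinuousSMul ℝ G] [T2Space G]
    {F : α → G} {X : Set α} (hX : IsCompact X) (hF : ContinuousOn F X) {x₀ : α} (hx₀ : x₀ ∈ X)
    (hnhds : ∀ x ∈ X, ∀ s ∈ Icc (0 : ℝ) 1, F x = s • F x₀ → F '' X ∈ 𝓝 (F x)) :
    ∃ x ∈ X, F x = 0 := by
  set S : Set ℝ := (fun s : ℝ => s • F x₀) ⁻¹' (F '' X)
  have hS : IsClosed S := (hX.image_of_continuousOn hF).isClosed.preimage (by fun_prop)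
  have hSnhds : ∀ x ∈ X, ∀ s ∈ Icc (0 : ℝ) 1, F x = s • F x₀ → s ∈ interior S :=
    fun x hx s hs hFx => mem_interior_iff_mem_nhds.2 <|
      (show Continuous fun s : ℝ => s • F x₀ by fun_prop).continuousAt.preimage_mem_nhds
        (hFx ▸ hnhds x hx s hs hFx)
  have hIcc : Icc 0 1 ⊆ interior S := by
    refine isPreconnected_Icc.subset_of_closure_inter_subset isOpen_interior
      ⟨1, right_mem_Icc.2 zero_le_one, hSnhds x₀ hx₀ 1 (right_mem_Icc.2 zero_le_one)
        (one_smul ℝ _).symm⟩ ?_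
    rintro s ⟨hs_cl, hs⟩
    obtain ⟨x, hx, hFx⟩ := hS.closure_subset (closure_mono interior_subset hs_cl)
    exact hSnhds x hx s hs hFx
  obtain ⟨x, hx, hFx⟩ := interior_subset (hIcc (left_mem_Icc.2 zero_le_one))
  exact ⟨x, hx, by simpa using hFx⟩

theorem eq_lineMap_of_apply_sub_eq_smul {E : Type*} [NormedAddCommGroup E] [NormedSpace ℝ E]
    {A B : E →L[ℝ] E} (hBA : B.comp A = .id ℝ E)
    {x x₀ v : E} {s : ℝ} (hA : A (x - x₀) = (s - 1) • v) :
    x = AffineMap.lineMap (x₀ - B v) x₀ s := by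
  have hx : x - x₀ = (s - 1) • B v := by
    rw [← map_smul, ← hA, ← ContinuousLinearMap.comp_apply, hBA, ContinuousLinearMap.id_apply]
  rw [AffineMap.lineMap_apply_module', eq_add_of_sub_eq hx]
  module

theorem Convex.exists_eq_lineMap_newton {E : Type*} [NormedAddCommGroup E] [NormedSpace ℝ E]
    [FiniteDimensional ℝ E] {F : E → E} {D X : Set E} (hX : Convex ℝ X) (hD : IsOpen D)
    (hF : ContDiffOn ℝ 1 F D) (hXD : X ⊆ D)
    (hinv : ∀ A ∈ convexHull ℝ (fderiv ℝ F '' X), ∃ B : E →L[ℝ] E,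
      A.comp B = .id ℝ E ∧ B.comp A = .id ℝ E)
    {x₀ x : E} (hx₀ : x₀ ∈ X) (hx : x ∈ X) {s : ℝ} (hFx : F x = s • F x₀) :
    ∃ A ∈ convexHull ℝ (fderiv ℝ F '' X), ∃ B : E →L[ℝ] E,
      A.comp B = .id ℝ E ∧ B.comp A = .id ℝ E ∧ x = AffineMap.lineMap (x₀ - B (F x₀)) x₀ s := by
  obtain ⟨A, hA, hFA⟩ := hX.exists_mem_convexHull_fderiv_sub_eq hD hF hXD hx₀ hx
  obtain ⟨B, hAB, hBA⟩ := hinv A hA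
  refine ⟨A, hA, B, hAB, hBA, eq_lineMap_of_apply_sub_eq_smul hBA ?_⟩
  rw [← hFA, hFx, sub_smul, one_smul]

theorem interval_newton_method_general
    (n : ℕ)
    (α β : Fin n → ℝ)
    (X : Set (Fin n → ℝ)) (hX : X = Set.univ.pi fun i => Icc (α i) (β i))
    (D : Set (Fin n → ℝ)) (hD : IsOpen D) (hXD : X ⊆ D)
    (F : (Fin n → ℝ) → (Fin n → ℝ)) (hF : ContDiffOn ℝ 1 F D)
    (x₀ : Fin n → ℝ) (hx₀ : x₀ ∈ interior X)
    (K : Set ((Fin n → ℝ) →L[ℝ] (Fin n → ℝ)))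
    (hK : K = convexHull ℝ {A | ∃ x ∈ X, A = fderiv ℝ F x})
    (hKinv : ∀ A ∈ K, ∃ B : (Fin n → ℝ) →L[ℝ] (Fin n → ℝ),
      A.comp B = ContinuousLinearMap.id ℝ (Fin n → ℝ) ∧
      B.comp A = ContinuousLinearMap.id ℝ (Fin n → ℝ))
    (N : Set (Fin n → ℝ))
    (hN : N = {y | ∃ A ∈ K, ∃ B : (Fin n → ℝ) →L[ℝ] (Fin n → ℝ),
      A.comp B = ContinuousLinearMap.id ℝ (Fin n → ℝ) ∧
      B.comp A = ContinuousLinearMap.id ℝ (Fin n → ℝ) ∧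
      y = x₀ - B (F x₀)})
    (hNX : N ⊆ interior X) :
    ∃ x, x ∈ X ∧ F x = 0 ∧ x ∈ N ∧ ∀ y ∈ X, F y = 0 → y = x := by
  have hXconv : Convex ℝ X := hX ▸ convex_pi fun i _ => convex_Icc _ _
  have hXcomp : IsCompact X := hX ▸ isCompact_univ_pi fun i => isCompact_Icc
  have hKX : K = convexHull ℝ (fderiv ℝ F '' X) := by
    rw [hK]; congr; ext; simp [eq_comm]
  rw [hKX] at hKinv
  have hnewton : ∀ x ∈ X, ∀ s : ℝ, F x = s • F x₀ → ∃ y ∈ N, x = AffineMap.lineMap y x₀ s :=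
    fun x hx s hFx => by
      obtain ⟨A, hA, B, hAB, hBA, rfl⟩ := hXconv.exists_eq_lineMap_newton hD hF hXD hKinv
        (interior_subset hx₀) hx hFx
      exact ⟨_, hN ▸ ⟨A, hKX ▸ hA, B, hAB, hBA, rfl⟩, rfl⟩
  obtain ⟨z, hz, hFz⟩ := exists_eq_zero_of_forall_image_mem_nhds hXcomp
    (hF.continuousOn.mono hXD) (interior_subset hx₀) fun x hx s hs hFx => by
      obtain ⟨y, hy, rfl⟩ := hnewton x hx s hFx
      have hint := hXconv.interior.lineMap_mem (hNX hy) hx₀ hs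
      obtain ⟨B, hAB, hBA⟩ :=
        hKinv _ (subset_convexHull ℝ _ (mem_image_of_mem _ (interior_subset hint)))
      exact (hF.contDiffAt (hD.mem_nhds (hXD (interior_subset hint)))).image_mem_nhds
        ⟨.equivOfInverse' _ B hAB hBA, rfl⟩ (mem_interior_iff_mem_nhds.1 hint)
  obtain ⟨y, hy, rfl⟩ := hnewton z hz 0 (by rw [hFz, zero_smul])
  have hinj : InjOn F X := hXconv.injOn_of_forall_mem_convexHull_fderiv_injective hD hF hXD
    fun A hA => (hKinv A hA).elim fun B hB =>
      Function.LeftInverse.injective (g := B) (DFunLike.congr_fun hB.2)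
  exact ⟨_, hz, hFz, by simpa using hy, fun w hw hFw => hinj hw hz (hFw.trans hFz.symm)⟩

/-- **Interval Newton Method.** Let `X = ∏ [αᵢ, βᵢ] ⊂ ℝⁿ` be a compact box contained in an
open set `D`, let `F : D → ℝⁿ` be `C¹`, and let `x₀` be an interior point of `X`. Let `K`
be the convex hull of the Jacobians `{DF(x) : x ∈ X}`. If every `A ∈ K` is invertible and
the interval Newton operator `N = {x₀ - A⁻¹ F(x₀) : A ∈ K}` satisfies `N ⊆ int X`, then
`F` has a unique zero `x*` in `X`, and moreover `x* ∈ N`. -/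
theorem interval_newton_method
    (n : ℕ) (hn : 1 ≤ n)
    (α β : Fin n → ℝ) (hαβ : ∀ i, α i < β i)
    (X : Set (Fin n → ℝ)) (hX : X = Set.univ.pi fun i => Icc (α i) (β i))
    (D : Set (Fin n → ℝ)) (hD : IsOpen D) (hXD : X ⊆ D)
    (F : (Fin n → ℝ) → (Fin n → ℝ)) (hF : ContDiffOn ℝ 1 F D)
    (x₀ : Fin n → ℝ) (hx₀ : x₀ ∈ interior X)
    (K : Set ((Fin n → ℝ) →L[ℝ] (Fin n → ℝ)))
    (hK : K = convexHull ℝ {A | ∃ x ∈ X, A = fderiv ℝ F x})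
    (hKinv : ∀ A ∈ K, ∃ B : (Fin n → ℝ) →L[ℝ] (Fin n → ℝ),
      A.comp B = ContinuousLinearMap.id ℝ (Fin n → ℝ) ∧
      B.comp A = ContinuousLinearMap.id ℝ (Fin n → ℝ))
    (N : Set (Fin n → ℝ))
    (hN : N = {y | ∃ A ∈ K, ∃ B : (Fin n → ℝ) →L[ℝ] (Fin n → ℝ),
      A.comp B = ContinuousLinearMap.id ℝ (Fin n → ℝ) ∧
      B.comp A = ContinuousLinearMap.id ℝ (Fin n → ℝ) ∧
      y = x₀ - B (F x₀)})
    (hNX : N ⊆ interior X) :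
    ∃ x, x ∈ X ∧ F x = 0 ∧ x ∈ N ∧ ∀ y ∈ X, F y = 0 → y = x :=
  interval_newton_method_general n α β X hX D hD hXD F hF x₀ hx₀ K hK hKinv N hN hNX
end

section
/- (Interval Newton Method for parameterized functions.) Let m, n ≥ 1, let A ⊂ ℝᵐ and X ⊂ ℝⁿ be products of compact nondegenerate intervals, let D ⊆ ℝᵐ × ℝⁿ be open with A × X ⊆ D, let F : D → ℝⁿ be smooth, and let x₀ be an interior point of X. Let K = convexHull { D_x F(a,x) : a ∈ A, x ∈ X } ⊆ ℝ^{n×n} be the convex hull of the partial Jacobians with respect to the x-variables. Assume every matrix B ∈ K is invertible and the set N = { x₀ − B⁻¹ · F(a, x₀) : B ∈ K, a ∈ A } is contained in the interior of X. Then there exists a smooth function g : A → N ⊆ X such that F(a, g(a)) = 0 for all a ∈ A; moreover, if F(a,x) = 0 for some (a,x) ∈ A × X, then x = g(a). -/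
open Set

open MeasureTheory



open Set

private lemma sum_extend_aux {M : Type*} [AddCommMonoid M] {ι : Type*} [Fintype ι] {d : ℕ}
    (hcard : Fintype.card ι ≤ d) (e : ι ≃ Fin (Fintype.card ι)) (g : ι → M) :
    (∑ j : Fin d, if h : (j : ℕ) < Fintype.card ι then g (e.symm ⟨j, h⟩) else 0)
      = ∑ i : ι, g i := by
  classical
  let emb : ι ↪ Fin d := ⟨fun i => Fin.castLE hcard (e i),
    fun i j h => e.injective (Fin.castLE_injective hcard h)⟩
  calc (∑ j : Fin d, if h : (j : ℕ) < Fintype.card ι then g (e.symm ⟨j, h⟩) else 0)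
      = ∑ j ∈ Finset.univ.map emb, (if h : (j : ℕ) < Fintype.card ι then g (e.symm ⟨j, h⟩) else 0) := by
        refine (Finset.sum_subset (Finset.subset_univ _) fun j _ hj => ?_).symm
        rw [dif_neg]
        intro h
        exact hj (Finset.mem_map.mpr ⟨e.symm ⟨j, h⟩, Finset.mem_univ _, by
          exact Fin.ext (show ((e (e.symm ⟨j, h⟩) : Fin _) : ℕ) = j by simp)⟩)
    _ = ∑ i : ι, (if h : ((emb i : Fin d) : ℕ) < Fintype.card ι then g (e.symm ⟨(emb i : Fin d), h⟩) else 0) :=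
        Finset.sum_map _ _ _
    _ = ∑ i : ι, g i := by
        refine Finset.sum_congr rfl fun i _ => ?_
        have h : ((emb i : Fin d) : ℕ) < Fintype.card ι := (e i).2
        rw [dif_pos h]
        have : (⟨(emb i : Fin d), h⟩ : Fin (Fintype.card ι)) = e i := by
          exact Fin.ext rfl
        rw [this, e.symm_apply_apply]

lemma isCompact_convexHull_of_isCompact' {E : Type*} [NormedAddCommGroup E] [NormedSpace ℝ E]
    [FiniteDimensional ℝ E] {s : Set E} (hs : IsCompact s) : IsCompact (convexHull ℝ s) := by
  classical
  rcases Set.eq_empty_or_nonempty s with rfl | ⟨p₀, hp₀⟩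
  · simpa using isCompact_empty
  set d := Module.finrank ℝ E + 1 with hd
  have hmap : IsCompact ((fun wf : (Fin d → ℝ) × (Fin d → E) => ∑ i, wf.1 i • wf.2 i) ''
      (stdSimplex ℝ (Fin d) ×ˢ Set.univ.pi fun _ : Fin d => s)) := by
    refine (IsCompact.prod (isCompact_stdSimplex _ _) (isCompact_univ_pi fun _ => hs)).image ?_
    fun_prop
  have heq : convexHull ℝ s = (fun wf : (Fin d → ℝ) × (Fin d → E) => ∑ i, wf.1 i • wf.2 i) ''
      (stdSimplex ℝ (Fin d) ×ˢ Set.univ.pi fun _ : Fin d => s) := by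
    apply Subset.antisymm
    · intro x hx
      obtain ⟨ι, hι, z, w, hzs, hai, hw0, hw1, hzx⟩ := eq_pos_convex_span_of_mem_convexHull hx
      have hcard : Fintype.card ι ≤ d :=
        hai.card_le_finrank_succ.trans (Nat.add_le_add_right (Submodule.finrank_le _) 1)
      let e := Fintype.equivFin ι
      let w' : Fin d → ℝ := fun j => if h : (j : ℕ) < Fintype.card ι then w (e.symm ⟨j, h⟩) else 0
      let f' : Fin d → E := fun j => if h : (j : ℕ) < Fintype.card ι then z (e.symm ⟨j, h⟩) else p₀
      refine ⟨(w', f'), ⟨⟨fun j => ?_, ?_⟩, fun i _ => ?_⟩, ?_⟩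
      · by_cases h : (j : ℕ) < Fintype.card ι
        · simpa [w', h] using le_of_lt (hw0 _)
        · simp [w', h]
      · exact (sum_extend_aux hcard e w).trans hw1
      · by_cases h : ((i : Fin d) : ℕ) < Fintype.card ι
        · simpa [f', h] using hzs (Set.mem_range_self _)
        · simpa [f', h] using hp₀
      · show (∑ j : Fin d, w' j • f' j) = x
        rw [← hzx]
        have hpt : ∀ j : Fin d, w' j • f' j =
            if h : (j : ℕ) < Fintype.card ι then w (e.symm ⟨j, h⟩) • z (e.symm ⟨j, h⟩) else 0 := fun j => by
          by_cases h : (j : ℕ) < Fintype.card ι <;> simp [w', f', h]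
        rw [Finset.sum_congr rfl fun j _ => hpt j]
        exact sum_extend_aux hcard e fun i => w i • z i
    · rintro x ⟨⟨w, f⟩, ⟨⟨hw0, hw1⟩, hf⟩, rfl⟩
      exact (convex_convexHull ℝ s).sum_mem (fun i _ => hw0 i) hw1
        (fun i _ => subset_convexHull ℝ s (hf i (Set.mem_univ i)))
  rw [heq]; exact hmap


lemma mvt_convexHull_aux {E F : Type*} [NormedAddCommGroup E] [NormedSpace ℝ E]
    [NormedAddCommGroup F] [NormedSpace ℝ F] [CompleteSpace F]
    {f : E → F} {J : E → (E →L[ℝ] F)} {s : Set E} (hs : Convex ℝ s)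
    {K : Set (E →L[ℝ] F)} (hKconv : Convex ℝ K) (hKcl : IsClosed K)
    (hJK : ∀ x ∈ s, J x ∈ K) (hder : ∀ x ∈ s, HasFDerivAt f (J x) x)
    (hJcont : ContinuousOn J s) {x y : E} (hx : x ∈ s) (hy : y ∈ s) :
    ∃ B ∈ K, f x - f y = B (x - y) := by
  set z : ℝ → E := fun t => y + t • (x - y) with hzdef
  have hzmem : ∀ t ∈ Icc (0 : ℝ) 1, z t ∈ s := by
    intro t ht
    have h := hs hy hx (by linarith [ht.2] : (0:ℝ) ≤ 1 - t) ht.1 (by ring)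
    have : (1 - t) • y + t • x = z t := by
      simp only [hzdef, smul_sub, sub_smul, one_smul]
      abel
    rwa [this] at h
  have hcz : Continuous z := by fun_prop
  set μ := volume.restrict (Icc (0 : ℝ) 1) with hμ
  haveI : IsProbabilityMeasure μ := ⟨by simp [hμ, Real.volume_Icc]⟩
  have hJz : ContinuousOn (fun t => J (z t)) (Icc (0:ℝ) 1) :=
    hJcont.comp hcz.continuousOn hzmem
  have hint : IntegrableOn (fun t => J (z t)) (Icc (0:ℝ) 1) :=
    hJz.integrableOn_compact isCompact_Icc
  set B := ∫ t, J (z t) ∂μ with hB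
  have hBK : B ∈ K :=
    hKconv.integral_mem hKcl
      ((ae_restrict_mem measurableSet_Icc).mono fun t ht => hJK _ (hzmem t ht)) hint
  refine ⟨B, hBK, ?_⟩
  have hderiv : ∀ t ∈ Icc (0:ℝ) 1, HasDerivAt (fun u => f (z u)) ((J (z t)) (x - y)) t := by
    intro t ht
    have h1 : HasDerivAt z (x - y) t := by
      simpa [hzdef] using ((hasDerivAt_id t).smul_const (x - y)).const_add y
    exact (hder _ (hzmem t ht)).comp_hasDerivAt t h1
  have hQ : IntervalIntegrable (fun t => (J (z t)) (x - y)) volume 0 1 := by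
    apply ContinuousOn.intervalIntegrable
    rw [uIcc_of_le zero_le_one]
    exact (ContinuousLinearMap.apply ℝ F (x - y)).continuous.comp_continuousOn hJz
  have hftc : ∫ t in (0:ℝ)..1, (J (z t)) (x - y) = f (z 1) - f (z 0) :=
    intervalIntegral.integral_eq_sub_of_hasDerivAt
      (fun t ht => hderiv t (by rwa [uIcc_of_le zero_le_one] at ht)) hQ
  have happ : ∫ t in (0:ℝ)..1, (J (z t)) (x - y) = B (x - y) := by
    rw [intervalIntegral.integral_of_le zero_le_one, ← integral_Icc_eq_integral_Ioc,
      hB, ContinuousLinearMap.integral_apply hint]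
  have hz1 : z 1 = x := by simp [hzdef]
  have hz0 : z 0 = y := by simp [hzdef]
  rw [show f x - f y = f (z 1) - f (z 0) by rw [hz1, hz0], ← hftc, happ]

/-- **Interval Newton Method for parameterized functions.** Let `A ⊂ ℝᵐ` and `X ⊂ ℝⁿ` be
compact nondegenerate boxes with `A × X` contained in an open set `D`, let
`F : D → ℝⁿ` be smooth, and let `x₀` be an interior point of `X`. Let `K` be the convex
hull of the partial Jacobians `{D_x F(a,x) : a ∈ A, x ∈ X}`. If every `B ∈ K` is
invertible and `N = {x₀ - B⁻¹ F(a,x₀) : B ∈ K, a ∈ A} ⊆ int X`, then there is a smooth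
`g : A → N ⊆ X` with `F(a, g(a)) = 0` for all `a ∈ A`; moreover every zero `(a,x)` of `F`
in `A × X` satisfies `x = g(a)`. -/
theorem parameterized_interval_newton_method
    (m n : ℕ) (hm : 1 ≤ m) (hn : 1 ≤ n)
    (γ δ : Fin m → ℝ) (hγδ : ∀ i, γ i < δ i)
    (α β : Fin n → ℝ) (hαβ : ∀ i, α i < β i)
    (A : Set (Fin m → ℝ)) (hA : A = Set.univ.pi fun i => Icc (γ i) (δ i))
    (X : Set (Fin n → ℝ)) (hX : X = Set.univ.pi fun i => Icc (α i) (β i))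
    (D : Set ((Fin m → ℝ) × (Fin n → ℝ))) (hD : IsOpen D) (hAXD : A ×ˢ X ⊆ D)
    (F : (Fin m → ℝ) × (Fin n → ℝ) → (Fin n → ℝ)) (hF : ContDiffOn ℝ (⊤ : ℕ∞) F D)
    (x₀ : Fin n → ℝ) (hx₀ : x₀ ∈ interior X)
    (K : Set ((Fin n → ℝ) →L[ℝ] (Fin n → ℝ)))
    (hK : K = convexHull ℝ {B | ∃ a ∈ A, ∃ x ∈ X, B = fderiv ℝ (fun y => F (a, y)) x})
    (hKinv : ∀ B ∈ K, ∃ B' : (Fin n → ℝ) →L[ℝ] (Fin n → ℝ),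
      B.comp B' = ContinuousLinearMap.id ℝ (Fin n → ℝ) ∧
      B'.comp B = ContinuousLinearMap.id ℝ (Fin n → ℝ))
    (N : Set (Fin n → ℝ))
    (hN : N = {y | ∃ B ∈ K, ∃ B' : (Fin n → ℝ) →L[ℝ] (Fin n → ℝ),
      B.comp B' = ContinuousLinearMap.id ℝ (Fin n → ℝ) ∧
      B'.comp B = ContinuousLinearMap.id ℝ (Fin n → ℝ) ∧
      ∃ a ∈ A, y = x₀ - B' (F (a, x₀))})
    (hNX : N ⊆ interior X) :
    ∃ g : (Fin m → ℝ) → (Fin n → ℝ), ContDiffOn ℝ (⊤ : ℕ∞) g A ∧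
      (∀ a ∈ A, g a ∈ N) ∧
      (∀ a ∈ A, F (a, g a) = 0) ∧
      (∀ a ∈ A, ∀ x ∈ X, F (a, x) = 0 → x = g a) := by
  classical
  have hXconv : Convex ℝ X := by rw [hX]; exact convex_pi fun i _ => convex_Icc _ _
  have hXcomp : IsCompact X := by rw [hX]; exact isCompact_univ_pi fun i => isCompact_Icc
  have hAcomp : IsCompact A := by rw [hA]; exact isCompact_univ_pi fun i => isCompact_Icc
  have hx₀X : x₀ ∈ X := interior_subset hx₀
  have hmemD : ∀ a ∈ A, ∀ x ∈ X, (a, x) ∈ D := fun a ha x hx => hAXD (Set.mk_mem_prod ha hx)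
  set ι : (Fin n → ℝ) →L[ℝ] (Fin m → ℝ) × (Fin n → ℝ) :=
    (0 : (Fin n → ℝ) →L[ℝ] (Fin m → ℝ)).prod (ContinuousLinearMap.id ℝ (Fin n → ℝ)) with hι
  set Jp : (Fin m → ℝ) → (Fin n → ℝ) → ((Fin n → ℝ) →L[ℝ] (Fin n → ℝ)) :=
    fun a x => (fderiv ℝ F (a, x)).comp ι with hJpdef
  have hcdF : ∀ p ∈ D, ContDiffAt ℝ (⊤ : ℕ∞) F p := fun p hp => hF.contDiffAt (hD.mem_nhds hp)
  have hder : ∀ a x, (a, x) ∈ D → HasFDerivAt (fun y => F (a, y)) (Jp a x) x := by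
    intro a x hp
    have hFd : HasFDerivAt F (fderiv ℝ F (a, x)) (a, x) :=
      ((hcdF _ hp).differentiableAt (by simp)).hasFDerivAt
    have hg : HasFDerivAt (fun y : Fin n → ℝ => ((a, y) : (Fin m → ℝ) × (Fin n → ℝ))) ι x :=
      (hasFDerivAt_const a x).prodMk (hasFDerivAt_id x)
    exact hFd.comp x hg
  have hfd : ∀ a x, (a, x) ∈ D → fderiv ℝ (fun y => F (a, y)) x = Jp a x :=
    fun a x hp => (hder a x hp).fderiv
  set S := {B | ∃ a ∈ A, ∃ x ∈ X, B = fderiv ℝ (fun y => F (a, y)) x} with hS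
  have hSK : S ⊆ K := by rw [hK]; exact subset_convexHull ℝ _
  have hJpS : ∀ a ∈ A, ∀ x ∈ X, Jp a x ∈ S :=
    fun a ha x hx => ⟨a, ha, x, hx, (hfd a x (hmemD a ha x hx)).symm⟩
  have hJpcont : ContinuousOn (fun p : (Fin m → ℝ) × (Fin n → ℝ) => Jp p.1 p.2) D := by
    have h1 : ContinuousOn (fderiv ℝ F) D := hF.continuousOn_fderiv_of_isOpen hD (by simp)
    exact ((ContinuousLinearMap.compL ℝ (Fin n → ℝ) ((Fin m → ℝ) × (Fin n → ℝ))
      (Fin n → ℝ)).flip ι).continuous.comp_continuousOn h1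
  have hScomp : IsCompact S := by
    have hSeq : S = (fun p : (Fin m → ℝ) × (Fin n → ℝ) => Jp p.1 p.2) '' (A ×ˢ X) := by
      ext B
      constructor
      · rintro ⟨a, ha, x, hx, rfl⟩
        exact ⟨(a, x), Set.mk_mem_prod ha hx, (hfd a x (hmemD a ha x hx)).symm⟩
      · rintro ⟨⟨a, x⟩, ⟨ha, hx⟩, rfl⟩
        exact hJpS a ha x hx
    rw [hSeq]
    exact (hAcomp.prod hXcomp).image_of_continuousOn (hJpcont.mono hAXD)
  have hKcomp : IsCompact K := by rw [hK]; exact isCompact_convexHull_of_isCompact' hScomp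
  have hKconv : Convex ℝ K := hK ▸ convex_convexHull ℝ _
  have hKcl : IsClosed K := hKcomp.isClosed
  have key : ∀ a ∈ A, ∀ x ∈ X, ∀ y ∈ X, ∃ B ∈ K, F (a, x) - F (a, y) = B (x - y) := by
    intro a ha x hx y hy
    refine mvt_convexHull_aux hXconv hKconv hKcl
      (fun u hu => hSK (hJpS a ha u hu))
      (fun u hu => hder a u (hmemD a ha u hu)) ?_ hx hy
    exact hJpcont.comp (Continuous.continuousOn (by fun_prop)) (fun u hu => hmemD a ha u hu)
  have inv_eq : ∀ (B B' : (Fin n → ℝ) →L[ℝ] (Fin n → ℝ)),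
      B'.comp B = ContinuousLinearMap.id ℝ (Fin n → ℝ) → ∀ v, B' (B v) = v :=
    fun B B' h v => by rw [← ContinuousLinearMap.comp_apply, h]; rfl
  have huniq : ∀ a ∈ A, ∀ x ∈ X, ∀ y ∈ X, F (a, x) = 0 → F (a, y) = 0 → x = y := by
    intro a ha x hx y hy hfx hfy
    obtain ⟨B, hBK, hBe⟩ := key a ha x hx y hy
    obtain ⟨B', _, h2⟩ := hKinv B hBK
    have h0 : B (x - y) = 0 := by rw [← hBe, hfx, hfy, sub_zero]
    have : x - y = 0 := by rw [← inv_eq B B' h2 (x - y), h0, map_zero]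
    exact sub_eq_zero.mp this
  have hrepr : ∀ a ∈ A, ∀ x ∈ X, F (a, x) = 0 → x ∈ N := by
    intro a ha x hx hfx
    obtain ⟨B, hBK, hBe⟩ := key a ha x hx x₀ hx₀X
    obtain ⟨B', h1, h2⟩ := hKinv B hBK
    rw [hN]
    refine ⟨B, hBK, B', h1, h2, a, ha, ?_⟩
    have h3 : B (x - x₀) = -F (a, x₀) := by rw [← hBe, hfx, zero_sub]
    have h4 : x - x₀ = -B' (F (a, x₀)) := by
      rw [← inv_eq B B' h2 (x - x₀), h3, map_neg]
    exact (eq_add_of_sub_eq h4).trans (sub_eq_neg_add x₀ (B' (F (a, x₀)))).symm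
  have hsol : ∀ a ∈ A, ∀ t ∈ Icc (0:ℝ) 1, ∀ x ∈ X,
      F (a, x) = (1 - t) • F (a, x₀) → x ∈ interior X := by
    intro a ha t ht x hx hfx
    obtain ⟨B, hBK, hBe⟩ := key a ha x hx x₀ hx₀X
    obtain ⟨B', h1, h2⟩ := hKinv B hBK
    have h3 : B (x - x₀) = (-t) • F (a, x₀) := by
      rw [← hBe, hfx]
      module
    have h4 : x - x₀ = (-t) • B' (F (a, x₀)) := by
      rw [← inv_eq B B' h2 (x - x₀), h3, _root_.map_smul]
    have hy₁ : x₀ - B' (F (a, x₀)) ∈ interior X :=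
      hNX (by rw [hN]; exact ⟨B, hBK, B', h1, h2, a, ha, rfl⟩)
    have hxe : x = (1 - t) • x₀ + t • (x₀ - B' (F (a, x₀))) := by
      rw [eq_add_of_sub_eq h4]
      module
    rw [hxe]
    exact hXconv.interior hx₀ hy₁ (by linarith [ht.2]) ht.1 (by ring)
  have hex : ∀ a ∈ A, ∃ x ∈ X, F (a, x) = 0 := by
    intro a ha
    set c := F (a, x₀) with hc
    set T := {t : ℝ | t ∈ Icc (0:ℝ) 1 ∧ ∃ x ∈ X, F (a, x) = (1 - t) • c} with hT
    have hTcomp : IsCompact T := by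
      set C := (Icc (0:ℝ) 1 ×ˢ X) ∩
        (fun q : ℝ × (Fin n → ℝ) => F (a, q.2) - (1 - q.1) • c) ⁻¹' {0} with hC
      have hcont : ContinuousOn (fun q : ℝ × (Fin n → ℝ) => F (a, q.2) - (1 - q.1) • c)
          (Icc (0:ℝ) 1 ×ˢ X) := by
        apply ContinuousOn.sub
        · exact hF.continuousOn.comp
            (Continuous.continuousOn (by fun_prop :
              Continuous fun q : ℝ × (Fin n → ℝ) => ((a, q.2) : (Fin m → ℝ) × (Fin n → ℝ))))
            (fun q hq => hmemD a ha q.2 hq.2)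
        · fun_prop
      have hCclosed : IsClosed C :=
        hcont.preimage_isClosed_of_isClosed (isClosed_Icc.prod hXcomp.isClosed)
          isClosed_singleton
      have hCcomp : IsCompact C :=
        (isCompact_Icc.prod hXcomp).of_isClosed_subset hCclosed inter_subset_left
      have hTeq : T = Prod.fst '' C := by
        ext t
        constructor
        · rintro ⟨ht, x, hxX, hfx⟩
          exact ⟨(t, x), ⟨⟨ht, hxX⟩, by simp [hfx]⟩, rfl⟩
        · rintro ⟨⟨t', x⟩, ⟨⟨ht, hxX⟩, hzero⟩, rfl⟩
          refine ⟨ht, x, hxX, ?_⟩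
          simpa [sub_eq_zero] using hzero
      rw [hTeq]
      exact hCcomp.image continuous_fst
    have hTopen : ∀ t ∈ T, T ∈ nhdsWithin t (Icc (0:ℝ) 1) := by
      rintro t ⟨ht, x, hxX, hfx⟩
      have hxint : x ∈ interior X := hsol a ha t ht x hxX hfx
      have hcd : ContDiffAt ℝ (⊤ : ℕ∞) (fun y => F (a, y)) x :=
        (hcdF _ (hmemD a ha x hxX)).comp x (ContDiffAt.prodMk contDiffAt_const contDiffAt_id)
      obtain ⟨B', h1, h2⟩ := hKinv (Jp a x) (hSK (hJpS a ha x hxX))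
      let eqv := ContinuousLinearEquiv.equivOfInverse (Jp a x) B'
        (fun v => inv_eq _ _ h2 v) (fun v => inv_eq _ _ h1 v)
      have hstrict : HasStrictFDerivAt (fun y => F (a, y))
          (eqv : (Fin n → ℝ) →L[ℝ] (Fin n → ℝ)) x :=
        hcd.hasStrictFDerivAt' (hder a x (hmemD a ha x hxX)) (by simp)
      have hmap : Filter.map (fun y => F (a, y)) (nhds x) = nhds (F (a, x)) :=
        hstrict.map_nhds_eq_of_equiv
      have himg : (fun y => F (a, y)) '' interior X ∈ nhds (F (a, x)) := by
        rw [← hmap]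
        exact Filter.image_mem_map (isOpen_interior.mem_nhds hxint)
      have hcont2 : Filter.Tendsto (fun s : ℝ => (1 - s) • c) (nhds t) (nhds (F (a, x))) := by
        have hcc : Continuous fun s : ℝ => (1 - s) • c := by fun_prop
        rw [hfx]
        exact hcc.tendsto t
      have hU := hcont2 himg
      filter_upwards [nhdsWithin_le_nhds hU, self_mem_nhdsWithin] with s hs hsIcc
      obtain ⟨x', hx'int, hFx'⟩ := hs
      exact ⟨hsIcc, x', interior_subset hx'int, hFx'⟩
    haveI : PreconnectedSpace ↥(Icc (0:ℝ) 1) :=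
      isPreconnected_iff_preconnectedSpace.mp isPreconnected_Icc
    have hcl : IsClosed (Subtype.val ⁻¹' T : Set ↥(Icc (0:ℝ) 1)) :=
      hTcomp.isClosed.preimage continuous_subtype_val
    have hop : IsOpen (Subtype.val ⁻¹' T : Set ↥(Icc (0:ℝ) 1)) := by
      rw [isOpen_iff_mem_nhds]
      intro p hp
      have h := hTopen p.1 hp
      rwa [← map_nhds_subtype_val, Filter.mem_map] at h
    have hne : (Subtype.val ⁻¹' T : Set ↥(Icc (0:ℝ) 1)).Nonempty := by
      refine ⟨⟨0, by constructor <;> norm_num⟩, ⟨by constructor <;> norm_num, x₀, hx₀X, ?_⟩⟩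
      norm_num [hc]
    have huniv : (Subtype.val ⁻¹' T : Set ↥(Icc (0:ℝ) 1)) = univ :=
      IsClopen.eq_univ ⟨hcl, hop⟩ hne
    have h1T : (1:ℝ) ∈ T := by
      have hmem : (⟨1, by constructor <;> norm_num⟩ : ↥(Icc (0:ℝ) 1)) ∈
          (Subtype.val ⁻¹' T : Set ↥(Icc (0:ℝ) 1)) := huniv ▸ mem_univ _
      exact hmem
    obtain ⟨_, x, hxX, hfx⟩ := h1T
    refine ⟨x, hxX, ?_⟩
    simpa using hfx
  have hex' : ∀ a : Fin m → ℝ, ∃ x : Fin n → ℝ, a ∈ A → x ∈ X ∧ F (a, x) = 0 := by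
    intro a
    by_cases h : a ∈ A
    · obtain ⟨x, hx1, hx2⟩ := hex a h
      exact ⟨x, fun _ => ⟨hx1, hx2⟩⟩
    · exact ⟨x₀, fun c => absurd c h⟩
  choose g hg using hex'
  have hgX : ∀ a ∈ A, g a ∈ X := fun a ha => (hg a ha).1
  have hg0 : ∀ a ∈ A, F (a, g a) = 0 := fun a ha => (hg a ha).2
  refine ⟨g, ?_, fun a ha => hrepr a ha _ (hgX a ha) (hg0 a ha), hg0,
    fun a ha x hx hfx => huniq a ha x hx (g a) (hgX a ha) hfx (hg0 a ha)⟩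
  intro a ha
  have hgaX : g a ∈ X := hgX a ha
  have hgaD : (a, g a) ∈ D := hmemD a ha _ hgaX
  have hgaint : g a ∈ interior X := hNX (hrepr a ha _ hgaX (hg0 a ha))
  set M := fderiv ℝ F (a, g a) with hM
  have hMder : HasFDerivAt F M (a, g a) :=
    ((hcdF _ hgaD).differentiableAt (by simp)).hasFDerivAt
  set Φ : (Fin m → ℝ) × (Fin n → ℝ) → (Fin m → ℝ) × (Fin n → ℝ) :=
    fun q => (q.1, F q) with hΦ
  set L := (ContinuousLinearMap.fst ℝ (Fin m → ℝ) (Fin n → ℝ)).prod M with hL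
  have hΦder : HasFDerivAt Φ L (a, g a) := (hasFDerivAt_fst).prodMk hMder
  have hΦcd : ContDiffAt ℝ (⊤ : ℕ∞) Φ (a, g a) :=
    ContDiffAt.prodMk (contDiff_fst.contDiffAt) (hcdF _ hgaD)
  have hBK : Jp a (g a) ∈ K := hSK (hJpS a ha _ hgaX)
  obtain ⟨B', h1, h2⟩ := hKinv _ hBK
  have hBdef : ∀ v : Fin n → ℝ, Jp a (g a) v = M (0, v) := by
    intro v
    simp [hJpdef, hι, hM]
  have hsplit : ∀ q : (Fin m → ℝ) × (Fin n → ℝ), M q = M (q.1, 0) + M (0, q.2) := by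
    intro q
    rw [← M.map_add, Prod.mk_add_mk, add_zero, zero_add]
  set Minl := M.comp ((ContinuousLinearMap.id ℝ (Fin m → ℝ)).prod
    (0 : (Fin m → ℝ) →L[ℝ] (Fin n → ℝ))) with hMinl
  set L' := (ContinuousLinearMap.fst ℝ (Fin m → ℝ) (Fin n → ℝ)).prod (B'.comp
    ((ContinuousLinearMap.snd ℝ (Fin m → ℝ) (Fin n → ℝ)) -
      Minl.comp (ContinuousLinearMap.fst ℝ (Fin m → ℝ) (Fin n → ℝ)))) with hL'
  have hLL' : Function.LeftInverse L' L := by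
    intro q
    show (((L q).1, B' ((L q).2 - Minl (L q).1)) : (Fin m → ℝ) × (Fin n → ℝ)) = q
    have e1 : (L q).1 = q.1 := rfl
    have e2 : (L q).2 = M q := rfl
    have e3 : Minl q.1 = M (q.1, 0) := rfl
    rw [e1, e2, e3]
    have e4 : M q - M (q.1, 0) = Jp a (g a) q.2 := by
      rw [hsplit q, add_sub_cancel_left, hBdef]
    rw [e4, inv_eq _ _ h2]
  have hL'L : Function.RightInverse L' L := by
    intro q
    show (((L' q).1, M (L' q)) : (Fin m → ℝ) × (Fin n → ℝ)) = q
    have e1 : (L' q).1 = q.1 := rfl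
    have e2 : (L' q).2 = B' (q.2 - M (q.1, 0)) := rfl
    have e3 : M (L' q) = M ((L' q).1, 0) + M (0, (L' q).2) := hsplit _
    rw [e3, e1, e2, ← hBdef, inv_eq _ _ h1]
    show (q.1, M (q.1, 0) + (q.2 - M (q.1, 0))) = q
    rw [add_sub_cancel]
  let eqv := ContinuousLinearEquiv.equivOfInverse L L' hLL' hL'L
  have hΦderE : HasFDerivAt Φ ((eqv : ((Fin m → ℝ) × (Fin n → ℝ)) →L[ℝ]
      ((Fin m → ℝ) × (Fin n → ℝ))) : ((Fin m → ℝ) × (Fin n → ℝ)) →L[ℝ]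
      ((Fin m → ℝ) × (Fin n → ℝ))) (a, g a) := hΦder
  set ψ := hΦcd.localInverse (f' := eqv) hΦderE (by simp) with hψdef
  have hψcd : ContDiffAt ℝ (⊤ : ℕ∞) ψ (Φ (a, g a)) := hΦcd.to_localInverse hΦderE (by simp)
  have hΦga : Φ (a, g a) = ((a, (0 : Fin n → ℝ)) : (Fin m → ℝ) × (Fin n → ℝ)) := by
    rw [hΦ]
    simp [hg0 a ha]
  have hψcd' : ContDiffAt ℝ (⊤ : ℕ∞) ψ ((a, (0 : Fin n → ℝ))) := hΦga ▸ hψcd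
  have hψa : ψ (a, (0 : Fin n → ℝ)) = (a, g a) := by
    rw [← hΦga]
    exact hΦcd.localInverse_apply_image hΦderE (by simp)
  set g' : (Fin m → ℝ) → (Fin n → ℝ) := fun p => (ψ (p, 0)).2 with hg'def
  have hins : ContDiffAt ℝ (⊤ : ℕ∞) (fun p : Fin m → ℝ =>
      ((p, (0 : Fin n → ℝ)) : (Fin m → ℝ) × (Fin n → ℝ))) a :=
    ContDiffAt.prodMk contDiffAt_id contDiffAt_const
  have hg'cd : ContDiffAt ℝ (⊤ : ℕ∞) g' a :=
    (contDiff_snd.contDiffAt).comp a (hψcd'.comp a hins)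
  have hstrict : HasStrictFDerivAt Φ ((eqv : ((Fin m → ℝ) × (Fin n → ℝ)) →L[ℝ]
      ((Fin m → ℝ) × (Fin n → ℝ)))) (a, g a) :=
    hΦcd.hasStrictFDerivAt' hΦderE (by simp)
  have hev0 : ∀ᶠ q in nhds ((a, (0 : Fin n → ℝ)) : (Fin m → ℝ) × (Fin n → ℝ)),
      Φ (ψ q) = q := by
    have h := hstrict.eventually_right_inverse
    rwa [hΦga] at h
  have htend : Filter.Tendsto (fun p : Fin m → ℝ =>
      ((p, (0 : Fin n → ℝ)) : (Fin m → ℝ) × (Fin n → ℝ))) (nhds a)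
      (nhds ((a, (0 : Fin n → ℝ)))) :=
    (continuous_id.prodMk continuous_const).tendsto a
  have hev1 : ∀ᶠ p in nhds a, Φ (ψ (p, (0 : Fin n → ℝ))) = (p, (0 : Fin n → ℝ)) :=
    htend.eventually hev0
  have hev2 : ∀ᶠ p in nhds a, (ψ (p, (0 : Fin n → ℝ))).2 ∈ interior X := by
    have hmemn : {q : (Fin m → ℝ) × (Fin n → ℝ) | q.2 ∈ interior X} ∈
        nhds (ψ ((a, (0 : Fin n → ℝ)))) := by
      rw [hψa]
      exact (isOpen_interior.preimage continuous_snd).mem_nhds hgaint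
    exact htend.eventually (hψcd'.continuousAt.eventually_mem hmemn)
  have hevA : ∀ᶠ p in nhdsWithin a A, g p = g' p := by
    filter_upwards [nhdsWithin_le_nhds hev1, nhdsWithin_le_nhds hev2,
      self_mem_nhdsWithin] with p h1p h2p hpA
    have hfst : (ψ (p, (0 : Fin n → ℝ))).1 = p := congrArg Prod.fst h1p
    have hzero : F (ψ (p, (0 : Fin n → ℝ))) = 0 := congrArg Prod.snd h1p
    have hψp : ψ (p, (0 : Fin n → ℝ)) = (p, g' p) := by
      rw [hg'def]
      exact Prod.ext hfst rfl
    have hF0 : F (p, g' p) = 0 := by rw [← hψp]; exact hzero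
    exact huniq p hpA (g p) (hgX p hpA) (g' p) (interior_subset h2p) (hg0 p hpA) hF0
  have hg'a : g a = g' a := by
    rw [hg'def]
    show g a = (ψ (a, 0)).2
    rw [hψa]
  exact (hg'cd.contDiffWithinAt).congr_of_eventuallyEq hevA hg'a
end

section
/- (Covering relations give symbolic dynamics.) Let N₁, …, N_k be pairwise disjoint h-sets in ℝ², let f be a continuous map defined on ⋃_{i=1}^k |N_i| with values in ℝ², and let M be a k×k matrix with entries in {0,1} such that whenever M_{ij} = 1, the h-set N_i f-covers N_j. Then for every biinfinite sequence (c_j)_{j∈ℤ} with values in {1, …, k} satisfying M_{c_j c_{j+1}} = 1 for all j ∈ ℤ, there exists a biinfinite sequence of points (x_j)_{j∈ℤ} such that x_j ∈ |N_{c_j}| and f(x_j) = x_{j+1} for all j ∈ ℤ. -/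
open Set

/-- An h-set in `ℝ²`: a rectangle `[a,b] × [c,d]` with `a < b` and `c < d`. -/
structure HSet where
  a : ℝ
  b : ℝ
  c : ℝ
  d : ℝ
  hab : a < b
  hcd : c < d

/-- The support `|N| = [a,b] × [c,d]` of an h-set. -/
def HSet.box (N : HSet) : Set (ℝ × ℝ) := Icc N.a N.b ×ˢ Icc N.c N.d

/-- The left edge `N^{le} = {a} × [c,d]`. -/
def HSet.leftEdge (N : HSet) : Set (ℝ × ℝ) := {N.a} ×ˢ Icc N.c N.d

/-- The right edge `N^{re} = {b} × [c,d]`. -/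
def HSet.rightEdge (N : HSet) : Set (ℝ × ℝ) := {N.b} ×ˢ Icc N.c N.d

/-- The left side `N^{l} = (-∞,a) × [c,d]`. -/
def HSet.leftSide (N : HSet) : Set (ℝ × ℝ) := Iio N.a ×ˢ Icc N.c N.d

/-- The right side `N^{r} = (b,∞) × [c,d]`. -/
def HSet.rightSide (N : HSet) : Set (ℝ × ℝ) := Ioi N.b ×ˢ Icc N.c N.d

/-- The horizontal strip `N^{s} = ℝ × (c,d)`. -/
def HSet.strip (N : HSet) : Set (ℝ × ℝ) := univ ×ˢ Ioo N.c N.d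

/-- The covering relation `N₁ ⟹f N₂`: `f(|N₁|) ⊆ N₂^s` and the left/right edges of `N₁`
are mapped to the left/right (or right/left) sides of `N₂`. -/
def Covers (f : ℝ × ℝ → ℝ × ℝ) (N₁ N₂ : HSet) : Prop :=
  MapsTo f N₁.box N₂.strip ∧
  ((MapsTo f N₁.rightEdge N₂.rightSide ∧ MapsTo f N₁.leftEdge N₂.leftSide) ∨
   (MapsTo f N₁.rightEdge N₂.leftSide ∧ MapsTo f N₁.leftEdge N₂.rightSide))

/-!
Start from the horizontal midline of the first h-set. A covering relation `N ⟹ N'` turns a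
curve crossing `N` from its left edge to its right edge into one whose image runs from one side
of `N'` to the other, so by the intermediate value theorem a subcurve is mapped across `N'`,
again from edge to edge. Iterating realises every finite admissible itinerary by a point. A
full orbit is then a point of the compact product `∏ⱼ |N_{c_j}|` in the closed sets
`{x | f (x j) = x (j + 1)}`, which have the finite intersection property.
-/

theorem abs_sub_lt_abs_sub_of_mem_uIcc {α : Type*} [AddCommGroup α] [LinearOrder α]
    [IsOrderedAddMonoid α] {a b c : α} (h : c ∈ uIcc a b) (hca : c ≠ a) :
    |b - c| < |b - a| := by
  rcases le_total a b with hab | hab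
  · rw [uIcc_of_le hab] at h
    rw [abs_of_nonneg (sub_nonneg.2 h.2), abs_of_nonneg (sub_nonneg.2 hab)]
    exact sub_lt_sub_left (lt_of_le_of_ne h.1 hca.symm) b
  · rw [uIcc_of_ge hab] at h
    rw [abs_of_nonpos (sub_nonpos.2 h.1), abs_of_nonpos (sub_nonpos.2 hab)]
    exact neg_lt_neg (sub_lt_sub_left (lt_of_le_of_ne h.2 hca) b)

theorem exists_uIcc_mapsTo_Icc {ψ : ℝ → ℝ} {s t a b : ℝ} (hψ : ContinuousOn ψ (uIcc s t))
    (hs : ψ s < a) (hab : a ≤ b) (ht : b < ψ t) :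
    ∃ u ∈ uIcc s t, ∃ v ∈ uIcc s t, ψ u = a ∧ ψ v = b ∧ MapsTo ψ (uIcc u v) (Icc a b) := by
  have hlevel : ∀ y ∈ uIcc (ψ s) (ψ t),
      IsCompact (uIcc s t ∩ ψ ⁻¹' {y}) ∧ (uIcc s t ∩ ψ ⁻¹' {y}).Nonempty := fun y hy =>
    ⟨isCompact_uIcc.of_isClosed_subset
      (hψ.preimage_isClosed_of_isClosed isCompact_uIcc.isClosed isClosed_singleton)
      inter_subset_left,
     intermediate_value_uIcc hψ hy⟩
  have ha := hlevel a (Icc_subset_uIcc ⟨hs.le, hab.trans ht.le⟩)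
  have hb := hlevel b (Icc_subset_uIcc ⟨(hs.trans_le hab).le, ht.le⟩)
  -- Take a closest pair of points `u, v` on the levels `a` and `b`: if `ψ` left `[a, b]`
  -- between them, it would cross one of these levels again closer to the other point.
  obtain ⟨⟨u, v⟩, ⟨⟨hu, hψu⟩, hv, hψv⟩, hmin⟩ :=
    (ha.1.prod hb.1).exists_isMinOn (ha.2.prod hb.2) (f := fun p => |p.2 - p.1|)
      (by fun_prop)
  simp only [mem_preimage, mem_singleton_iff] at hψu hψv
  refine ⟨u, hu, v, hv, hψu, hψv, fun x hx => ⟨?_, ?_⟩⟩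
  · by_contra! hxa
    obtain ⟨y, hy, hψy⟩ := intermediate_value_uIcc
      (hψ.mono (uIcc_subset_uIcc (uIcc_subset_uIcc hu hv hx) hv))
      (Icc_subset_uIcc ⟨hxa.le, hψv ▸ hab⟩ : a ∈ uIcc (ψ x) (ψ v))
    have hyv : |v - u| ≤ |v - y| := isMinOn_iff.1 hmin (y, v)
      ⟨⟨uIcc_subset_uIcc (uIcc_subset_uIcc hu hv hx) hv hy, hψy⟩, hv, hψv⟩
    exact (abs_sub_right_of_mem_uIcc hy).not_gt
      ((abs_sub_lt_abs_sub_of_mem_uIcc hx (by rintro rfl; linarith)).trans_le hyv)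
  · by_contra! hxb
    obtain ⟨z, hz, hψz⟩ := intermediate_value_uIcc
      (hψ.mono (uIcc_subset_uIcc hu (uIcc_subset_uIcc hu hv hx)))
      (Icc_subset_uIcc ⟨hψu ▸ hab, hxb.le⟩ : b ∈ uIcc (ψ u) (ψ x))
    have huz : |v - u| ≤ |z - u| := isMinOn_iff.1 hmin (u, z)
      ⟨⟨hu, hψu⟩, uIcc_subset_uIcc hu (uIcc_subset_uIcc hu hv hx) hz, hψz⟩
    have hxv := abs_sub_lt_abs_sub_of_mem_uIcc (uIcc_comm u v ▸ hx) (by rintro rfl; linarith)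
    rw [abs_sub_comm u x, abs_sub_comm u v] at hxv
    exact (abs_sub_left_of_mem_uIcc hz).not_gt (hxv.trans_le huz)

namespace HSet

def IsHorizontalCurve (N : HSet) (g : ℝ → ℝ × ℝ) (u v : ℝ) : Prop :=
  ContinuousOn g (uIcc u v) ∧ MapsTo g (uIcc u v) N.box ∧ g u ∈ N.leftEdge ∧ g v ∈ N.rightEdge

theorem isHorizontalCurve_midline (N : HSet) :
    N.IsHorizontalCurve (fun x => (x, (N.c + N.d) / 2)) N.a N.b := by
  have hmid : (N.c + N.d) / 2 ∈ Icc N.c N.d := by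
    constructor <;> linarith [N.hcd]
  refine ⟨by fun_prop, fun x hx => ⟨uIcc_of_le N.hab.le ▸ hx, hmid⟩, ⟨rfl, hmid⟩, ⟨rfl, hmid⟩⟩

theorem mem_prod_Icc_of_mem_strip {N : HSet} {p : ℝ × ℝ} {S : Set ℝ} (hp : p ∈ N.strip)
    (hS : p.1 ∈ S) : p ∈ S ×ˢ Icc N.c N.d :=
  ⟨hS, Ioo_subset_Icc_self hp.2⟩

end HSet

open HSet

theorem Covers.exists_isHorizontalCurve_comp {f : ℝ × ℝ → ℝ × ℝ} {N₁ N₂ : HSet}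
    (hcov : Covers f N₁ N₂) (hf : ContinuousOn f N₁.box) {g : ℝ → ℝ × ℝ} {u v : ℝ}
    (hg : N₁.IsHorizontalCurve g u v) :
    ∃ u' ∈ uIcc u v, ∃ v' ∈ uIcc u v, N₂.IsHorizontalCurve (f ∘ g) u' v' := by
  obtain ⟨hgc, hgN₁, hu, hv⟩ := hg
  have hfg : ContinuousOn (f ∘ g) (uIcc u v) := hf.comp hgc hgN₁
  obtain ⟨u', hu', v', hv', hu'a, hv'b, hmaps⟩ : ∃ u' ∈ uIcc u v, ∃ v' ∈ uIcc u v,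
      (f (g u')).1 = N₂.a ∧ (f (g v')).1 = N₂.b ∧
      MapsTo (fun x => (f (g x)).1) (uIcc u' v') (Icc N₂.a N₂.b) := by
    rcases hcov.2 with ⟨hright, hleft⟩ | ⟨hright, hleft⟩
    · exact exists_uIcc_mapsTo_Icc hfg.fst (hleft hu).1 N₂.hab.le (hright hv).1
    · rw [uIcc_comm u v] at hfg ⊢
      exact exists_uIcc_mapsTo_Icc hfg.fst (hright hv).1 N₂.hab.le (hleft hu).1
  have hsub : uIcc u' v' ⊆ uIcc u v := uIcc_subset_uIcc hu' hv'
  exact ⟨u', hu', v', hv', hfg.mono hsub,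
    fun x hx => mem_prod_Icc_of_mem_strip (hcov.1 (hgN₁ (hsub hx))) (hmaps hx),
    mem_prod_Icc_of_mem_strip (hcov.1 (hgN₁ hu')) hu'a,
    mem_prod_Icc_of_mem_strip (hcov.1 (hgN₁ hv')) hv'b⟩

theorem exists_iterate_mem_box_of_covers {f : ℝ × ℝ → ℝ × ℝ} {N : ℕ → HSet}
    (hf : ∀ i, ContinuousOn f (N i).box) (hcov : ∀ i, Covers f (N i) (N (i + 1))) (n : ℕ) :
    ∃ p, ∀ i ≤ n, f^[i] p ∈ (N i).box := by
  set g := fun x : ℝ => (x, ((N 0).c + (N 0).d) / 2)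
  suffices h : ∃ u v, (∀ i ≤ n, MapsTo (f^[i] ∘ g) (uIcc u v) (N i).box) ∧
      (N n).IsHorizontalCurve (f^[n] ∘ g) u v by
    obtain ⟨u, v, hmaps, -⟩ := h
    exact ⟨g u, fun i hi => hmaps i hi left_mem_uIcc⟩
  induction n with
  | zero =>
    have hg := (N 0).isHorizontalCurve_midline
    refine ⟨(N 0).a, (N 0).b, fun i hi => ?_, hg⟩
    obtain rfl := Nat.le_zero.1 hi
    exact hg.2.1
  | succ n ih =>
    obtain ⟨u, v, hmaps, hcurve⟩ := ih
    obtain ⟨u', hu', v', hv', hcurve'⟩ := (hcov n).exists_isHorizontalCurve_comp (hf n) hcurve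
    rw [← Function.comp_assoc, ← Function.iterate_succ'] at hcurve'
    refine ⟨u', v', fun i hi => ?_, hcurve'⟩
    rcases Nat.le_succ_iff.1 hi with hi | rfl
    · exact (hmaps i hi).mono_left (uIcc_subset_uIcc hu' hv')
    · exact hcurve'.2.1

theorem exists_seq_of_orbit_segment {X : Type*} {f : X → X} {K : ℤ → Set X}
    (hK : ∀ j, (K j).Nonempty) {m : ℤ} {n : ℕ} {p : X} (hp : ∀ i ≤ n, f^[i] p ∈ K (m + i)) :
    ∃ x : ℤ → X, (∀ j, x j ∈ K j) ∧ ∀ j, m ≤ j → j < m + n → f (x j) = x (j + 1) := by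
  classical
  refine ⟨fun j => if m ≤ j ∧ j ≤ m + n then f^[(j - m).toNat] p else (hK j).some,
    fun j => ?_, fun j hmj hjn => ?_⟩ <;> dsimp only
  · split_ifs with hj
    · have hj' : m + (j - m).toNat = j := by omega
      simpa only [hj'] using hp (j - m).toNat (by omega)
    · exact (hK j).some_mem
  · rw [if_pos ⟨hmj, hjn.le⟩, if_pos ⟨by omega, by omega⟩,
      show (j + 1 - m).toNat = (j - m).toNat + 1 by omega, Function.iterate_succ_apply']

theorem exists_orbit_of_forall_exists_orbit_segment {X : Type*} [TopologicalSpace X]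
    [T2Space X] {f : X → X} {K : ℤ → Set X} (hK : ∀ j, IsCompact (K j))
    (hf : ∀ j, ContinuousOn f (K j))
    (hseg : ∀ (m : ℤ) (n : ℕ), ∃ p, ∀ i ≤ n, f^[i] p ∈ K (m + i)) :
    ∃ x : ℤ → X, ∀ j, x j ∈ K j ∧ f (x j) = x (j + 1) := by
  have hne : ∀ j, (K j).Nonempty := fun j => by
    obtain ⟨p, hp⟩ := hseg j 0
    exact ⟨p, by simpa using hp 0 le_rfl⟩
  -- `f` is only continuous on `K j`, so `x j ∈ K j` is part of `T j` to make it closed.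
  set T : ℤ → Set (ℤ → X) := fun j =>
    {x | x j ∈ K j} ∩ (fun x => (f (x j), x (j + 1))) ⁻¹' diagonal X
  have hT : ∀ j, IsClosed (T j) := fun j =>
    ContinuousOn.preimage_isClosed_of_isClosed
      (((hf j).comp (continuous_apply j).continuousOn fun _ h => h :
        ContinuousOn (fun x : ℤ → X => f (x j)) {x | x j ∈ K j}).prodMk
        (continuous_apply (j + 1)).continuousOn)
      ((hK j).isClosed.preimage (continuous_apply j)) isClosed_diagonal
  obtain ⟨x, -, hx⟩ := (isCompact_univ_pi hK).inter_iInter_nonempty T hT fun s => by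
    obtain ⟨ub, hub⟩ := s.bddAbove
    obtain ⟨lb, hlb⟩ := s.bddBelow
    obtain ⟨p, hp⟩ := hseg lb (ub - lb + 1).toNat
    obtain ⟨x, hxK, hx⟩ := exists_seq_of_orbit_segment hne hp
    refine ⟨x, fun j _ => hxK j, mem_iInter₂.2 fun j hj => ⟨hxK j, ?_⟩⟩
    exact hx j (hlb hj) (by have := hub hj; omega)
  exact ⟨x, fun j => mem_iInter.1 hx j⟩

theorem covering_relations_symbolic_dynamics_general
    (k : ℕ) (N : Fin k → HSet)
    (f : ℝ × ℝ → ℝ × ℝ) (hf : ContinuousOn f (⋃ i, (N i).box))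
    (M : Fin k → Fin k → ℕ)
    (hcov : ∀ i j, M i j = 1 → Covers f (N i) (N j))
    (c : ℤ → Fin k) (hc : ∀ j : ℤ, M (c j) (c (j + 1)) = 1) :
    ∃ x : ℤ → ℝ × ℝ, ∀ j : ℤ, x j ∈ (N (c j)).box ∧ f (x j) = x (j + 1) := by
  have hfN : ∀ i, ContinuousOn f (N i).box := fun i =>
    hf.mono (subset_iUnion (fun i => (N i).box) i)
  refine exists_orbit_of_forall_exists_orbit_segment
    (fun j => isCompact_Icc.prod isCompact_Icc) (fun j => hfN (c j)) fun m n => ?_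
  refine exists_iterate_mem_box_of_covers (N := fun i => N (c (m + i))) (fun i => hfN _)
    (fun i => ?_) n
  simpa only [Nat.cast_succ, add_assoc] using hcov _ _ (hc (m + i))

/-- **Covering relations give symbolic dynamics.** Given pairwise disjoint h-sets
`N₁, …, N_k`, a continuous map `f` on their union and a 0-1 transition matrix `M` such
that `M i j = 1` implies `Nᵢ` `f`-covers `N_j`, every biinfinite sequence of symbols
admissible for `M` is realized by a full orbit of `f` visiting the corresponding h-sets. -/
theorem covering_relations_symbolic_dynamics
    (k : ℕ) (hk : 1 ≤ k) (N : Fin k → HSet)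
    (hdisj : ∀ i j, i ≠ j → Disjoint (N i).box (N j).box)
    (f : ℝ × ℝ → ℝ × ℝ) (hf : ContinuousOn f (⋃ i, (N i).box))
    (M : Fin k → Fin k → ℕ) (hM01 : ∀ i j, M i j = 0 ∨ M i j = 1)
    (hcov : ∀ i j, M i j = 1 → Covers f (N i) (N j))
    (c : ℤ → Fin k) (hc : ∀ j : ℤ, M (c j) (c (j + 1)) = 1) :
    ∃ x : ℤ → ℝ × ℝ, ∀ j : ℤ, x j ∈ (N (c j)).box ∧ f (x j) = x (j + 1) :=
  covering_relations_symbolic_dynamics_general k N f hf M hcov c hc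
end

section
/- (Covering relations detect periodic orbits.) Let N₁, …, N_k be pairwise disjoint h-sets in ℝ², let f be a continuous map defined on ⋃_{i=1}^k |N_i| with values in ℝ², and let M be a k×k matrix with entries in {0,1} such that whenever M_{ij} = 1, the h-set N_i f-covers N_j. If (c_j)_{j∈ℤ} is a biinfinite sequence with values in {1, …, k} satisfying M_{c_j c_{j+1}} = 1 for all j ∈ ℤ, and (c_j) is periodic with principal (least) period n, then there exists a point x ∈ |N_{c_0}| such that f^j(x) ∈ |N_{c_j}| for all j ≥ 0, f^n(x) = x, and n is the principal period of x under f (i.e. f^m(x) ≠ x for 0 < m < n). -/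
open Set

/-!
Along a periodic itinerary `c`, project back onto the next box (in the first coordinate) after
each application of `f`. This clamped iterate is continuous on `|N_{c₀}|` and maps its edges to
edges, so composing it with the last covering relation gives a map `g` such that `N_{c₀}`
`g`-covers itself. Such a map has a fixed point by the Poincaré–Miranda theorem, which follows
from a parity count of `{1,2}`-edges on a labelled grid (Sperner's lemma for squares). At the
fixed point the clamping is never active, because a clamped point lies on an edge and then every
later image lies in a side, outside the boxes; so it is a genuine periodic orbit following `c`.
As the boxes are disjoint, the orbit determines the itinerary, whence the least period.
-/

theorem Finset.sum_range_add_succ_of_charTwo {R : Type*} [Ring R] [CharP R 2] (a : ℕ → R)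
    (K : ℕ) : ∑ j ∈ Finset.range K, (a j + a (j + 1)) = a 0 + a K := by
  simpa [CharTwo.sub_eq_add, add_comm] using Finset.sum_range_sub a K

open Finset in
theorem Finset.sum_grid_eq_sum_boundary_of_charTwo {R : Type*} [Ring R] [CharP R 2]
    (H V : ℕ → ℕ → R) (K : ℕ) :
    ∑ i ∈ range K, ∑ j ∈ range K, (H i j + H i (j + 1) + (V i j + V (i + 1) j)) =
      ∑ i ∈ range K, (H i 0 + H i K) + ∑ j ∈ range K, (V 0 j + V K j) := by
  simp only [sum_add_distrib (f := fun j => H _ j + H _ (j + 1))]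
  rw [sum_add_distrib, sum_comm (f := fun i j => V i j + V (i + 1) j)]
  simp only [sum_range_add_succ_of_charTwo]

namespace Sperner

def edgeParity (x y : Fin 3) : ZMod 2 := if x ≠ 0 ∧ y ≠ 0 ∧ x ≠ y then 1 else 0

def parityTwo (x : Fin 3) : ZMod 2 := if x = 2 then 1 else 0

lemma edgeParity_eq_zero_of_ne : ∀ (t x y : Fin 3), t ≠ 0 → x ≠ t → y ≠ t → edgeParity x y = 0 := by
  decide

lemma edgeParity_of_ne_zero :
    ∀ x y : Fin 3, x ≠ 0 → y ≠ 0 → edgeParity x y = parityTwo x + parityTwo y := by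
  decide

/-- A cycle of labels avoiding `0` alternates between `1` and `2` an even number of times. -/
lemma eq_or_eq_of_cycle_parity_ne_zero : ∀ a b c d : Fin 3,
    edgeParity a b + edgeParity c d + (edgeParity a c + edgeParity b d) ≠ 0 →
      ∀ t, t = a ∨ t = b ∨ t = c ∨ t = d := by
  decide

open Finset in
theorem exists_fullyLabelled_cell (K : ℕ) (l : ℕ → ℕ → Fin 3)
    (hbot : ∀ i ≤ K, l i 0 ≠ 1) (htop : ∀ i ≤ K, l i K ≠ 2)
    (hleft : ∀ j ≤ K, l 0 j ≠ 0) (hright : ∀ j ≤ K, l K j ≠ 1) :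
    ∃ i < K, ∃ j < K, ∀ t : Fin 3,
      ∃ p ∈ Set.Icc i (i + 1), ∃ q ∈ Set.Icc j (j + 1), l p q = t := by
  set H := fun i j => edgeParity (l i j) (l (i + 1) j)
  set V := fun i j => edgeParity (l i j) (l i (j + 1))
  have hH : ∀ i ∈ range K, H i 0 + H i K = 0 := fun i hi => by
    have hi := mem_range.1 hi
    show edgeParity _ _ + edgeParity _ _ = 0
    rw [edgeParity_eq_zero_of_ne 1 _ _ (by decide) (hbot i hi.le) (hbot (i + 1) hi),
      edgeParity_eq_zero_of_ne 2 _ _ (by decide) (htop i hi.le) (htop (i + 1) hi), add_zero]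
  have hV : ∀ j ∈ range K, V 0 j + V K j = parityTwo (l 0 j) + parityTwo (l 0 (j + 1)) :=
    fun j hj => by
      have hj := mem_range.1 hj
      show edgeParity _ _ + edgeParity _ _ = _
      rw [edgeParity_of_ne_zero _ _ (hleft j hj.le) (hleft (j + 1) hj),
        edgeParity_eq_zero_of_ne 1 _ _ (by decide) (hright j hj.le) (hright (j + 1) hj), add_zero]
  have hcorner₀ : l 0 0 = 2 := by
    have := hleft 0 K.zero_le; have := hbot 0 K.zero_le; omega
  have hcorner₁ : l 0 K ≠ 2 := htop 0 K.zero_le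
  -- Only the left side carries `{1,2}`-edges; it runs from label `2` up to a label other than `2`.
  have hboundary : ∑ i ∈ range K, (H i 0 + H i K) + ∑ j ∈ range K, (V 0 j + V K j) = 1 := by
    rw [sum_eq_zero hH, sum_congr rfl hV, sum_range_add_succ_of_charTwo, parityTwo, parityTwo,
      if_pos hcorner₀, if_neg hcorner₁]
    rfl
  obtain ⟨i, hi, j, hj, hcell⟩ : ∃ i ∈ range K, ∃ j ∈ range K,
      H i j + H i (j + 1) + (V i j + V (i + 1) j) ≠ 0 := by
    by_contra! h
    rw [← sum_grid_eq_sum_boundary_of_charTwo,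
      sum_eq_zero fun i hi => sum_eq_zero (h i hi)] at hboundary
    exact zero_ne_one hboundary
  refine ⟨i, mem_range.1 hi, j, mem_range.1 hj, fun t => ?_⟩
  have hi₀ : i ∈ Set.Icc i (i + 1) := ⟨le_rfl, i.le_succ⟩
  have hi₁ : i + 1 ∈ Set.Icc i (i + 1) := ⟨i.le_succ, le_rfl⟩
  have hj₀ : j ∈ Set.Icc j (j + 1) := ⟨le_rfl, j.le_succ⟩
  have hj₁ : j + 1 ∈ Set.Icc j (j + 1) := ⟨j.le_succ, le_rfl⟩
  rcases eq_or_eq_of_cycle_parity_ne_zero _ _ _ _ hcell t with rfl | rfl | rfl | rfl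
  exacts [⟨_, hi₀, _, hj₀, rfl⟩, ⟨_, hi₁, _, hj₀, rfl⟩, ⟨_, hi₀, _, hj₁, rfl⟩,
    ⟨_, hi₁, _, hj₁, rfl⟩]

end Sperner

section Miranda

lemma add_mul_div_mem_Icc {a b : ℝ} (hab : a ≤ b) {i K : ℕ} (hi : i ≤ K) :
    a + i * ((b - a) / K) ∈ Icc a b := by
  rcases K.eq_zero_or_pos with rfl | hK
  · simp [Nat.le_zero.1 hi, hab]
  have hi' : (i : ℝ) / K ≤ 1 := div_le_one_of_le₀ (by exact_mod_cast hi) (Nat.cast_nonneg K)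
  rw [show (i : ℝ) * ((b - a) / K) = i / K * (b - a) by ring]
  constructor <;> nlinarith [div_nonneg (Nat.cast_nonneg (α := ℝ) i) (Nat.cast_nonneg (α := ℝ) K)]

lemma abs_add_mul_div_sub_le {a b : ℝ} (hab : a ≤ b) (K : ℕ) {i p p' : ℕ}
    (hp : p ∈ Icc i (i + 1)) (hp' : p' ∈ Icc i (i + 1)) :
    |(a + p * ((b - a) / K)) - (a + p' * ((b - a) / K))| ≤ (b - a) / K := by
  have hstep : 0 ≤ (b - a) / K := div_nonneg (sub_nonneg.2 hab) (Nat.cast_nonneg K)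
  have hpp' : |(p : ℝ) - p'| ≤ 1 := by
    have h₁ : (i : ℝ) ≤ p := by exact_mod_cast hp.1
    have h₂ : (p : ℝ) ≤ i + 1 := by exact_mod_cast hp.2
    have h₃ : (i : ℝ) ≤ p' := by exact_mod_cast hp'.1
    have h₄ : (p' : ℝ) ≤ i + 1 := by exact_mod_cast hp'.2
    rw [abs_sub_le_iff]; constructor <;> linarith
  calc |(a + p * ((b - a) / K)) - (a + p' * ((b - a) / K))| = |(p : ℝ) - p'| * ((b - a) / K) := by
        rw [← abs_of_nonneg hstep, ← abs_mul, abs_of_nonneg hstep]; ring_nf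
    _ ≤ (b - a) / K := mul_le_of_le_one_left hstep hpp'

noncomputable def signLabel (v : ℝ × ℝ) : Fin 3 := if 0 < v.1 then 0 else if 0 < v.2 then 1 else 2

lemma signLabel_eq_zero_iff {v : ℝ × ℝ} : signLabel v = 0 ↔ 0 < v.1 := by
  unfold signLabel; split_ifs <;> simp_all

lemma signLabel_eq_one_iff {v : ℝ × ℝ} : signLabel v = 1 ↔ v.1 ≤ 0 ∧ 0 < v.2 := by
  unfold signLabel; split_ifs <;> simp_all

lemma signLabel_eq_two_iff {v : ℝ × ℝ} : signLabel v = 2 ↔ v.1 ≤ 0 ∧ v.2 ≤ 0 := by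
  unfold signLabel; split_ifs <;> simp_all

lemma norm_le_of_signLabel {u v w : ℝ × ℝ} {ε : ℝ} (hu : signLabel u = 0) (hv : signLabel v = 1)
    (hw : signLabel w = 2) (huv : dist u v ≤ ε) (hwv : dist w v ≤ ε) : ‖v‖ ≤ ε := by
  rw [signLabel_eq_zero_iff] at hu
  rw [signLabel_eq_one_iff] at hv
  rw [signLabel_eq_two_iff] at hw
  rw [Prod.dist_eq, Real.dist_eq, Real.dist_eq] at huv hwv
  have h₁ : |u.1 - v.1| ≤ ε := (le_max_left _ _).trans huv
  have h₂ : |w.2 - v.2| ≤ ε := (le_max_right _ _).trans hwv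
  rw [Prod.norm_def, Real.norm_eq_abs, Real.norm_eq_abs]
  rw [abs_sub_le_iff] at h₁ h₂
  exact max_le (abs_le.2 ⟨by linarith, by linarith⟩) (abs_le.2 ⟨by linarith, by linarith⟩)

lemma IsCompact.exists_eq_zero_of_forall_exists_norm_le {α E : Type*} [TopologicalSpace α]
    [NormedAddCommGroup E] {s : Set α} {F : α → E} (hs : IsCompact s) (hF : ContinuousOn F s)
    (h : ∀ ε > 0, ∃ p ∈ s, ‖F p‖ ≤ ε) : ∃ p ∈ s, F p = 0 := by
  obtain ⟨p, hp, hmin⟩ := hs.exists_isMinOn (let ⟨p, hp, _⟩ := h 1 one_pos; ⟨p, hp⟩) hF.norm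
  refine ⟨p, hp, norm_le_zero_iff.1 (le_of_forall_pos_le_add fun ε hε => ?_)⟩
  obtain ⟨q, hq, hqε⟩ := h ε hε
  simpa using (hmin hq).trans hqε

variable {a b c d : ℝ} {F : ℝ × ℝ → ℝ × ℝ}

lemma exists_norm_le_of_boundary_signs (hab : a ≤ b) (hcd : c ≤ d)
    (hF : ContinuousOn F (Icc a b ×ˢ Icc c d))
    (hl : ∀ y ∈ Icc c d, (F (a, y)).1 < 0) (hr : ∀ y ∈ Icc c d, 0 < (F (b, y)).1)
    (hb : ∀ x ∈ Icc a b, (F (x, c)).2 < 0) (ht : ∀ x ∈ Icc a b, 0 < (F (x, d)).2)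
    {ε : ℝ} (hε : 0 < ε) : ∃ p ∈ Icc a b ×ˢ Icc c d, ‖F p‖ ≤ ε := by
  obtain ⟨δ, hδ, hFδ⟩ := Metric.uniformContinuousOn_iff_le.1
    ((isCompact_Icc.prod isCompact_Icc).uniformContinuousOn_of_continuous hF) ε hε
  obtain ⟨K, hK⟩ := exists_nat_gt (max ((b - a) / δ) ((d - c) / δ))
  have hK₀ : (0 : ℝ) < K :=
    ((div_nonneg (sub_nonneg.2 hab) hδ.le).trans (le_max_left _ _)).trans_lt hK
  have hKx : (b - a) / K ≤ δ := by
    rw [div_le_iff₀ hK₀]; linarith [(div_lt_iff₀ hδ).1 ((le_max_left _ _).trans_lt hK)]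
  have hKy : (d - c) / K ≤ δ := by
    rw [div_le_iff₀ hK₀]; linarith [(div_lt_iff₀ hδ).1 ((le_max_right _ _).trans_lt hK)]
  set P : ℕ → ℕ → ℝ × ℝ := fun i j => (a + i * ((b - a) / K), c + j * ((d - c) / K))
  have hP : ∀ i ≤ K, ∀ j ≤ K, P i j ∈ Icc a b ×ˢ Icc c d := fun i hi j hj =>
    ⟨add_mul_div_mem_Icc hab hi, add_mul_div_mem_Icc hcd hj⟩
  have hKK : ∀ t : ℝ, (K : ℝ) * (t / K) = t := fun t => by field_simp
  obtain ⟨i, hi, j, hj, hcell⟩ :=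
    Sperner.exists_fullyLabelled_cell K (fun i j => signLabel (F (P i j)))
      (fun i hi h => (hb _ (hP i hi 0 K.zero_le).1).not_gt <| by
        simpa [P] using (signLabel_eq_one_iff.1 h).2)
      (fun i hi h => (ht _ (hP i hi 0 K.zero_le).1).not_ge <| by
        simpa [P, hKK] using (signLabel_eq_two_iff.1 h).2)
      (fun j hj h => (hl _ (hP 0 K.zero_le j hj).2).not_gt <| by
        simpa [P] using signLabel_eq_zero_iff.1 h)
      (fun j hj h => by simp [P, hKK, signLabel_eq_zero_iff.2 (hr _ (hP 0 K.zero_le j hj).2)] at h)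
  obtain ⟨p₀, hp₀, q₀, hq₀, h₀⟩ := hcell 0
  obtain ⟨p₁, hp₁, q₁, hq₁, h₁⟩ := hcell 1
  obtain ⟨p₂, hp₂, q₂, hq₂, h₂⟩ := hcell 2
  have hmem : ∀ p ∈ Icc i (i + 1), ∀ q ∈ Icc j (j + 1), P p q ∈ Icc a b ×ˢ Icc c d :=
    fun p hp q hq => hP p (hp.2.trans hi) q (hq.2.trans hj)
  have hnear : ∀ p ∈ Icc i (i + 1), ∀ q ∈ Icc j (j + 1), dist (F (P p q)) (F (P p₁ q₁)) ≤ ε :=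
    fun p hp q hq => hFδ _ (hmem p hp q hq) _ (hmem p₁ hp₁ q₁ hq₁) <| by
      rw [Prod.dist_eq, Real.dist_eq, Real.dist_eq]
      exact max_le ((abs_add_mul_div_sub_le hab K hp hp₁).trans hKx)
        ((abs_add_mul_div_sub_le hcd K hq hq₁).trans hKy)
  exact ⟨P p₁ q₁, hmem p₁ hp₁ q₁ hq₁,
    norm_le_of_signLabel h₀ h₁ h₂ (hnear p₀ hp₀ q₀ hq₀) (hnear p₂ hp₂ q₂ hq₂)⟩

theorem exists_eq_zero_of_boundary_signs (hab : a ≤ b) (hcd : c ≤ d)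
    (hF : ContinuousOn F (Icc a b ×ˢ Icc c d))
    (hl : ∀ y ∈ Icc c d, (F (a, y)).1 < 0) (hr : ∀ y ∈ Icc c d, 0 < (F (b, y)).1)
    (hb : ∀ x ∈ Icc a b, (F (x, c)).2 < 0) (ht : ∀ x ∈ Icc a b, 0 < (F (x, d)).2) :
    ∃ p ∈ Icc a b ×ˢ Icc c d, F p = 0 :=
  (isCompact_Icc.prod isCompact_Icc).exists_eq_zero_of_forall_exists_norm_le hF
    fun _ hε => exists_norm_le_of_boundary_signs hab hcd hF hl hr hb ht hε

end Miranda

section MapsToUpToSwap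

variable {α β γ : Type*} {φ : α → β} {ψ : β → γ} {sL sR : Set α} {tL tR : Set β} {uL uR : Set γ}

def Set.MapsToUpToSwap (φ : α → β) (sL sR : Set α) (tL tR : Set β) : Prop :=
  (MapsTo φ sR tR ∧ MapsTo φ sL tL) ∨ (MapsTo φ sR tL ∧ MapsTo φ sL tR)

lemma Set.MapsToUpToSwap.of_mapsTo (hL : MapsTo φ sL tL) (hR : MapsTo φ sR tR) :
    MapsToUpToSwap φ sL sR tL tR :=
  Or.inl ⟨hR, hL⟩

lemma Set.MapsToUpToSwap.comp (hψ : MapsToUpToSwap ψ tL tR uL uR)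
    (hφ : MapsToUpToSwap φ sL sR tL tR) : MapsToUpToSwap (ψ ∘ φ) sL sR uL uR := by
  rcases hψ with ⟨h₁, h₂⟩ | ⟨h₁, h₂⟩ <;> rcases hφ with ⟨h₃, h₄⟩ | ⟨h₃, h₄⟩
  exacts [Or.inl ⟨h₁.comp h₃, h₂.comp h₄⟩, Or.inr ⟨h₂.comp h₃, h₁.comp h₄⟩,
    Or.inr ⟨h₁.comp h₃, h₂.comp h₄⟩, Or.inl ⟨h₂.comp h₃, h₁.comp h₄⟩]

lemma Set.MapsToUpToSwap.mapsTo_union (hφ : MapsToUpToSwap φ sL sR tL tR) :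
    MapsTo φ (sL ∪ sR) (tL ∪ tR) := by
  rcases hφ with ⟨hR, hL⟩ | ⟨hR, hL⟩
  · exact hL.union_union hR
  · exact (hL.union_union hR).mono_right (union_comm _ _).le

end MapsToUpToSwap

namespace HSet

variable {N N₁ N₂ N₃ : HSet} {φ ψ : ℝ × ℝ → ℝ × ℝ} {p : ℝ × ℝ}

def edges (N : HSet) : Set (ℝ × ℝ) := N.leftEdge ∪ N.rightEdge

def sides (N : HSet) : Set (ℝ × ℝ) := N.leftSide ∪ N.rightSide

lemma disjoint_sides_box : Disjoint N.sides N.box := by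
  rw [Set.disjoint_left]
  rintro p (⟨h₁, -⟩ | ⟨h₁, -⟩) ⟨⟨h₂, h₃⟩, -⟩
  · exact (mem_Iio.1 h₁).not_ge h₂
  · exact (mem_Ioi.1 h₁).not_ge h₃

lemma strip_subset_box_union_sides : N.strip ⊆ N.box ∪ N.sides := by
  rintro p ⟨-, hc, hd⟩
  rcases lt_or_ge p.1 N.a with ha | ha
  · exact Or.inr (Or.inl ⟨ha, hc.le, hd.le⟩)
  rcases le_or_gt p.1 N.b with hb | hb
  · exact Or.inl ⟨⟨ha, hb⟩, hc.le, hd.le⟩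
  · exact Or.inr (Or.inr ⟨hb, hc.le, hd.le⟩)

def clamp (N : HSet) (p : ℝ × ℝ) : ℝ × ℝ := (max N.a (min N.b p.1), p.2)

lemma continuous_clamp : Continuous N.clamp := by
  unfold clamp; fun_prop

lemma clamp_eq_self (hp : p ∈ N.box) : N.clamp p = p := by
  rw [clamp, min_eq_right hp.1.2, max_eq_right hp.1.1]

lemma mapsTo_clamp_strip : MapsTo N.clamp N.strip N.box := fun _ ⟨_, hc, hd⟩ =>
  ⟨⟨le_max_left _ _, max_le N.hab.le (min_le_left _ _)⟩, hc.le, hd.le⟩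

lemma mapsTo_clamp_leftSide : MapsTo N.clamp N.leftSide N.leftEdge := fun p ⟨ha, hy⟩ =>
  ⟨by rw [clamp, min_eq_right ((mem_Iio.1 ha).le.trans N.hab.le), max_eq_left (mem_Iio.1 ha).le]
      rfl, hy⟩

lemma mapsTo_clamp_rightSide : MapsTo N.clamp N.rightSide N.rightEdge := fun p ⟨hb, hy⟩ =>
  ⟨by rw [clamp, min_eq_left (mem_Ioi.1 hb).le, max_eq_right N.hab.le]; rfl, hy⟩

lemma mapsTo_clamp_sides : MapsTo N.clamp N.sides N.edges :=
  mapsTo_clamp_leftSide.union_union mapsTo_clamp_rightSide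

def RespectsEdges (φ : ℝ × ℝ → ℝ × ℝ) (N₁ N₂ : HSet) : Prop :=
  MapsTo φ N₁.box N₂.box ∧ MapsToUpToSwap φ N₁.leftEdge N₁.rightEdge N₂.leftEdge N₂.rightEdge

lemma RespectsEdges.id : RespectsEdges id N N :=
  ⟨mapsTo_id _, .of_mapsTo (mapsTo_id _) (mapsTo_id _)⟩

lemma RespectsEdges.comp (hψ : RespectsEdges ψ N₂ N₃) (hφ : RespectsEdges φ N₁ N₂) :
    RespectsEdges (ψ ∘ φ) N₁ N₃ :=
  ⟨hψ.1.comp hφ.1, hψ.2.comp hφ.2⟩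

end HSet

namespace Covers

open HSet

variable {N N₁ N₂ N₃ : HSet} {f g φ : ℝ × ℝ → ℝ × ℝ}

lemma comp_respectsEdges (hf : Covers f N₂ N₃) (hφ : RespectsEdges φ N₁ N₂) :
    Covers (f ∘ φ) N₁ N₃ :=
  ⟨hf.1.comp hφ.1, MapsToUpToSwap.comp (ψ := f) hf.2 hφ.2⟩

lemma respectsEdges_clamp_comp (hf : Covers f N₁ N₂) : RespectsEdges (N₂.clamp ∘ f) N₁ N₂ :=
  ⟨mapsTo_clamp_strip.comp hf.1,
    (MapsToUpToSwap.of_mapsTo mapsTo_clamp_leftSide mapsTo_clamp_rightSide).comp (φ := f) hf.2⟩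

lemma mapsTo_sides (hf : Covers f N₁ N₂) : MapsTo f N₁.edges N₂.sides :=
  MapsToUpToSwap.mapsTo_union (φ := f) hf.2

theorem exists_fixedPoint (hg : ContinuousOn g N.box) (h : Covers g N N) :
    ∃ x ∈ N.box, g x = x := by
  -- `σ = 1` if `g` preserves the two edges and `σ = -1` if it swaps them.
  obtain ⟨σ, hσ, hl, hr⟩ : ∃ σ : ℝ, σ ≠ 0 ∧
      (∀ y ∈ Icc N.c N.d, σ * ((g (N.a, y)).1 - N.a) < 0) ∧
      (∀ y ∈ Icc N.c N.d, 0 < σ * ((g (N.b, y)).1 - N.b)) := by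
    rcases h.2 with ⟨hre, hle⟩ | ⟨hre, hle⟩
    · refine ⟨1, one_ne_zero, fun y hy => ?_, fun y hy => ?_⟩
      · linarith [mem_Iio.1 (hle (show (N.a, y) ∈ N.leftEdge from ⟨rfl, hy⟩)).1]
      · linarith [mem_Ioi.1 (hre (show (N.b, y) ∈ N.rightEdge from ⟨rfl, hy⟩)).1]
    · refine ⟨-1, by norm_num, fun y hy => ?_, fun y hy => ?_⟩
      · linarith [mem_Ioi.1 (hle (show (N.a, y) ∈ N.leftEdge from ⟨rfl, hy⟩)).1, N.hab]
      · linarith [mem_Iio.1 (hre (show (N.b, y) ∈ N.rightEdge from ⟨rfl, hy⟩)).1, N.hab]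
  obtain ⟨x, hx, hx0⟩ := exists_eq_zero_of_boundary_signs N.hab.le N.hcd.le
    (F := fun p => (σ * ((g p).1 - p.1), p.2 - (g p).2))
    ((continuousOn_const.mul (hg.fst.sub continuousOn_fst)).prodMk
      (continuousOn_snd.sub hg.snd)) hl hr
    (fun x hx => sub_neg.2 (h.1 ⟨hx, left_mem_Icc.2 N.hcd.le⟩).2.1)
    (fun x hx => sub_pos.2 (h.1 ⟨hx, right_mem_Icc.2 N.hcd.le⟩).2.2)
  simp only [Prod.mk_eq_zero, mul_eq_zero, hσ, false_or, sub_eq_zero] at hx0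
  exact ⟨x, hx, Prod.ext hx0.1 hx0.2.symm⟩

open Function

/-- Projecting back onto the next box keeps the iterates inside the boxes, where `f` is
continuous. -/
def clampedIterate (f : ℝ × ℝ → ℝ × ℝ) (Q : ℕ → HSet) : ℕ → ℝ × ℝ → ℝ × ℝ
  | 0 => id
  | j + 1 => (Q (j + 1)).clamp ∘ f ∘ clampedIterate f Q j

variable {Q : ℕ → HSet} {x : ℝ × ℝ} {m : ℕ}

lemma respectsEdges_clampedIterate (hcov : ∀ j, Covers f (Q j) (Q (j + 1))) :
    ∀ j, RespectsEdges (clampedIterate f Q j) (Q 0) (Q j)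
  | 0 => .id
  | j + 1 => (hcov j).respectsEdges_clamp_comp.comp (respectsEdges_clampedIterate hcov j)

lemma continuousOn_clampedIterate (hcov : ∀ j, Covers f (Q j) (Q (j + 1)))
    (hf : ∀ j, ContinuousOn f (Q j).box) : ∀ j, ContinuousOn (clampedIterate f Q j) (Q 0).box
  | 0 => continuousOn_id
  | j + 1 => continuous_clamp.comp_continuousOn <| (hf j).comp
      (continuousOn_clampedIterate hcov hf j) (respectsEdges_clampedIterate hcov j).1

lemma apply_clampedIterate_mem_sides (hcov : ∀ j, Covers f (Q j) (Q (j + 1))) {i : ℕ}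
    (hi : f (clampedIterate f Q i x) ∈ (Q (i + 1)).sides) :
    ∀ j ≥ i, f (clampedIterate f Q j x) ∈ (Q (j + 1)).sides :=
  Nat.le_induction hi fun _ _ ih => (hcov _).mapsTo_sides (mapsTo_clamp_sides ih)

lemma apply_clampedIterate_mem_box (hcov : ∀ j, Covers f (Q j) (Q (j + 1)))
    (hx : x ∈ (Q 0).box) (hm : f (clampedIterate f Q m x) ∈ (Q (m + 1)).box) {i : ℕ}
    (hi : i ≤ m) : f (clampedIterate f Q i x) ∈ (Q (i + 1)).box := by
  by_contra hbox
  have hside := (strip_subset_box_union_sides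
    ((hcov i).1 ((respectsEdges_clampedIterate hcov i).1 hx))).resolve_left hbox
  exact Set.disjoint_left.1 disjoint_sides_box (apply_clampedIterate_mem_sides hcov hside m hi) hm

lemma clampedIterate_eq_iterate (hcov : ∀ j, Covers f (Q j) (Q (j + 1)))
    (hx : x ∈ (Q 0).box) (hm : f (clampedIterate f Q m x) ∈ (Q (m + 1)).box) :
    ∀ i ≤ m, clampedIterate f Q i x = f^[i] x
  | 0, _ => rfl
  | i + 1, hi => by
    rw [iterate_succ_apply', ← clampedIterate_eq_iterate hcov hx hm i (by omega)]
    exact clamp_eq_self (apply_clampedIterate_mem_box hcov hx hm (by omega))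

theorem exists_periodicPt (hcov : ∀ j, Covers f (Q j) (Q (j + 1)))
    (hf : ∀ j, ContinuousOn f (Q j).box) {n : ℕ} (hn : 0 < n) (hQ : Periodic Q n) :
    ∃ x ∈ (Q 0).box, (∀ i, f^[i] x ∈ (Q i).box) ∧ IsPeriodicPt f n x := by
  obtain ⟨m, rfl⟩ : ∃ m, n = m + 1 := ⟨n - 1, by omega⟩
  have hQm : Q (m + 1) = Q 0 := by simpa using hQ 0
  have hreturn : Covers (f ∘ clampedIterate f Q m) (Q 0) (Q 0) := by
    simpa only [hQm] using (hcov m).comp_respectsEdges (respectsEdges_clampedIterate hcov m)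
  obtain ⟨x, hx, hfix⟩ := hreturn.exists_fixedPoint
    ((hf m).comp (continuousOn_clampedIterate hcov hf m) (respectsEdges_clampedIterate hcov m).1)
  replace hfix : f (clampedIterate f Q m x) = x := hfix
  have horbit := clampedIterate_eq_iterate hcov hx (m := m) (by rw [hQm, hfix]; exact hx)
  have hperiodic : IsPeriodicPt f (m + 1) x := by
    rw [IsPeriodicPt, IsFixedPt, iterate_succ_apply', ← horbit m le_rfl]
    exact hfix
  refine ⟨x, hx, fun i => ?_, hperiodic⟩
  rw [← hperiodic.iterate_mod_apply, ← hQ.map_mod_nat,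
    ← horbit _ (Nat.lt_succ_iff.1 (Nat.mod_lt _ m.succ_pos))]
  exact (respectsEdges_clampedIterate hcov _).1 hx

end Covers

theorem Function.Periodic.eq_of_forall_natCast {α : Type*} {c c' : ℤ → α} {n : ℕ} (hn : 0 < n)
    (hc : Function.Periodic c n) (hc' : Function.Periodic c' n) (h : ∀ j : ℕ, c j = c' j) :
    c = c' := by
  funext z
  have hz : 0 ≤ z + z.natAbs * n := by
    have : (1 : ℤ) ≤ n := by exact_mod_cast hn
    rw [Int.natCast_natAbs]
    nlinarith [neg_abs_le z, abs_nonneg z]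
  rw [← hc.nat_mul z.natAbs z, ← hc'.nat_mul z.natAbs z, ← Int.toNat_of_nonneg hz]
  exact h _

theorem covering_relations_periodic_orbits_general
    (k : ℕ) (N : Fin k → HSet)
    (hdisj : ∀ i j, i ≠ j → Disjoint (N i).box (N j).box)
    (f : ℝ × ℝ → ℝ × ℝ) (hf : ContinuousOn f (⋃ i, (N i).box))
    (M : Fin k → Fin k → ℕ)
    (hcov : ∀ i j, M i j = 1 → Covers f (N i) (N j))
    (c : ℤ → Fin k) (hc : ∀ j : ℤ, M (c j) (c (j + 1)) = 1)
    (n : ℕ) (hn : 0 < n)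
    (hper : ∀ j : ℤ, c (j + (n : ℤ)) = c j)
    (hleast : ∀ m : ℕ, 0 < m → m < n → ∃ j : ℤ, c (j + (m : ℤ)) ≠ c j) :
    ∃ x ∈ (N (c 0)).box,
      (∀ j : ℕ, f^[j] x ∈ (N (c (j : ℤ))).box) ∧
      f^[n] x = x ∧
      ∀ m : ℕ, 0 < m → m < n → f^[m] x ≠ x := by
  obtain ⟨x, hx, horbit, hfix⟩ := Covers.exists_periodicPt (Q := fun j : ℕ => N (c j))
    (fun j => by simpa using hcov _ _ (hc j))
    (fun _ => hf.mono (subset_iUnion (fun i => (N i).box) _)) hn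
    (fun j => by simpa using congrArg N (hper j))
  refine ⟨x, hx, horbit, hfix, fun m hm₀ hmn hm => ?_⟩
  obtain ⟨z, hz⟩ := hleast m hm₀ hmn
  have hshift : ∀ j : ℕ, c (j + m) = c j := fun j => by
    by_contra hne
    refine Set.disjoint_left.1 (hdisj _ _ hne) ?_ (horbit j)
    simpa [Function.iterate_add_apply, hm] using horbit (j + m)
  exact hz <| congrFun
    (Function.Periodic.eq_of_forall_natCast hn (Function.Periodic.add_const hper _) hper hshift) z

/-- **Covering relations detect periodic orbits.** Given pairwise disjoint h-sets
`N₁, …, N_k`, a continuous map `f` on their union and a 0-1 transition matrix `M` such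
that `M i j = 1` implies `Nᵢ` `f`-covers `N_j`, every `M`-admissible biinfinite symbol
sequence which is periodic with principal period `n` is realized by a point `x ∈ |N_{c₀}|`
whose orbit follows the sequence, with `fⁿ(x) = x` and `n` the principal period of `x`. -/
theorem covering_relations_periodic_orbits
    (k : ℕ) (hk : 1 ≤ k) (N : Fin k → HSet)
    (hdisj : ∀ i j, i ≠ j → Disjoint (N i).box (N j).box)
    (f : ℝ × ℝ → ℝ × ℝ) (hf : ContinuousOn f (⋃ i, (N i).box))
    (M : Fin k → Fin k → ℕ) (hM01 : ∀ i j, M i j = 0 ∨ M i j = 1)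
    (hcov : ∀ i j, M i j = 1 → Covers f (N i) (N j))
    (c : ℤ → Fin k) (hc : ∀ j : ℤ, M (c j) (c (j + 1)) = 1)
    (n : ℕ) (hn : 0 < n)
    (hper : ∀ j : ℤ, c (j + (n : ℤ)) = c j)
    (hleast : ∀ m : ℕ, 0 < m → m < n → ∃ j : ℤ, c (j + (m : ℤ)) ≠ c j) :
    ∃ x ∈ (N (c 0)).box,
      (∀ j : ℕ, f^[j] x ∈ (N (c (j : ℤ))).box) ∧
      f^[n] x = x ∧
      ∀ m : ℕ, 0 < m → m < n → f^[m] x ≠ x :=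
  covering_relations_periodic_orbits_general k N hdisj f hf M hcov c hc n hn hper hleast
end
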